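/- arXiv:1208.1405 — 2 statements merged into one kernel-verified Lean document; each statement's English description precedes it below -/
import Mathlib

section
/- Two round annuli A1 = {z ∈ ℂ : r1 < |z| < R1} and A2 = {z ∈ ℂ : r2 < |z| < R2} with 0 < r1 < R1 < ∞ and 0 < r2 < R2 < ∞ are conformally equivalent (i.e., there exists a biholomorphic map between them) if and only if R1/r1 = R2/r2. -/
/-- The round annulus `{z : ℂ | r < |z| < R}`. -/
def annulus (r R : ℝ) : Set ℂ := {z : ℂ | r < ‖z‖ ∧ ‖z‖ < R}

open Complex Set Filter

namespace AnnulusProof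


lemma mem_annulus {r R : ℝ} {z : ℂ} : z ∈ annulus r R ↔ r < ‖z‖ ∧ ‖z‖ < R :=
  Iff.rfl

lemma isOpen_annulus (r R : ℝ) : IsOpen (annulus r R) := by
  have : annulus r R = norm ⁻¹' (Ioo r R) := rfl
  rw [this]
  exact isOpen_Ioo.preimage continuous_norm

lemma isConnected_annulus {r R : ℝ} (h0 : 0 ≤ r) (h : r < R) : IsConnected (annulus r R) := by
  have hmap : annulus r R =
      (fun p : ℝ × ℝ => (p.1 : ℂ) * Complex.exp (p.2 * Complex.I)) '' (Ioo r R ×ˢ univ) := by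
    ext z
    constructor
    · rintro ⟨h1, h2⟩
      exact ⟨(‖z‖, Complex.arg z), ⟨⟨h1, h2⟩, trivial⟩, Complex.norm_mul_exp_arg_mul_I z⟩
    · rintro ⟨⟨s, θ⟩, ⟨⟨hs1, hs2⟩, -⟩, rfl⟩
      have : ‖(s : ℂ) * Complex.exp (θ * Complex.I)‖ = s := by
        rw [norm_mul, Complex.norm_exp_ofReal_mul_I, mul_one, Complex.norm_real, Real.norm_eq_abs,
          abs_of_pos (lt_of_le_of_lt h0 hs1)]
      exact ⟨by rw [this]; exact hs1, by rw [this]; exact hs2⟩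
  rw [hmap]
  refine IsConnected.image ?_ _ ?_
  · exact (isConnected_Ioo h).prod ⟨⟨0, trivial⟩, isPreconnected_univ⟩
  · fun_prop

lemma closure_annulus_subset {a b : ℝ} :
    closure (annulus a b) ⊆ {z : ℂ | a ≤ ‖z‖ ∧ ‖z‖ ≤ b} := by
  refine closure_minimal (fun z hz => ⟨hz.1.le, hz.2.le⟩) ?_
  have : {z : ℂ | a ≤ ‖z‖ ∧ ‖z‖ ≤ b} = norm ⁻¹' (Icc a b) := rfl
  rw [this]
  exact isClosed_Icc.preimage continuous_norm

lemma frontier_annulus_subset {a b : ℝ} :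
    frontier (annulus a b) ⊆ {z : ℂ | ‖z‖ = a ∨ ‖z‖ = b} := by
  intro z hz
  have h1 : z ∈ closure (annulus a b) := hz.1
  have h2 : z ∉ annulus a b := by
    rw [frontier, (isOpen_annulus a b).interior_eq] at hz
    exact hz.2
  have h3 := closure_annulus_subset h1
  rcases lt_or_eq_of_le h3.1 with h | h
  · rcases lt_or_eq_of_le h3.2 with h' | h'
    · exact absurd ⟨h, h'⟩ h2
    · exact Or.inr h'
  · exact Or.inl h.symm

/-- Maximum modulus principle on a closed sub-annulus. -/
lemma maxmod {F : ℂ → ℂ} {S : Set ℂ} (hS : IsOpen S) (hF : DifferentiableOn ℂ F S)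
    {a b C : ℝ} (hsub : {z : ℂ | a ≤ ‖z‖ ∧ ‖z‖ ≤ b} ⊆ S)
    (hbound : ∀ w : ℂ, ‖w‖ = a ∨ ‖w‖ = b → ‖F w‖ ≤ C)
    {z : ℂ} (hz : a ≤ ‖z‖) (hz' : ‖z‖ ≤ b) : ‖F z‖ ≤ C := by
  rcases eq_or_lt_of_le hz with h | h
  · exact hbound z (Or.inl h.symm)
  rcases eq_or_lt_of_le hz' with h' | h'
  · exact hbound z (Or.inr h')
  have hcl : closure (annulus a b) ⊆ S := fun w hw => hsub (closure_annulus_subset hw)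
  have key : ‖F z‖ ≤ C := by
    refine Complex.norm_le_of_forall_mem_frontier_norm_le (U := annulus a b) ?_ ?_ ?_ ?_
    · exact (Metric.isBounded_closedBall (x := (0:ℂ)) (r := b)).subset
        (fun w hw => by simpa [Complex.dist_eq] using hw.2.le)
    · exact ⟨hF.mono (fun w hw => hcl (subset_closure hw)), (hF.continuousOn).mono hcl⟩
    · intro w hw
      exact hbound w (frontier_annulus_subset hw)
    · exact subset_closure ⟨h, h'⟩
  simpa using key


lemma core {f : ℂ → ℂ} {r R K₁ K₂ : ℝ} (hr : 0 < r) (hrR : r < R)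
    (hK₁ : 0 < K₁) (hK₂ : 0 < K₂)
    (hf : DifferentiableOn ℂ f (annulus r R))
    (hbd : ∀ ε > 0, ∃ δ > 0, ∀ w ∈ annulus r R,
      (‖w‖ < r + δ → ‖f w‖ ≤ K₁ + ε) ∧
      (R - δ < ‖w‖ → ‖f w‖ ≤ K₂ + ε)) :
    ∀ z ∈ annulus r R, f z ≠ 0 → ∀ τ : ℝ,
      Real.log (‖f z‖) + τ * Real.log (‖z‖) ≤
        max (Real.log K₁ + τ * Real.log r) (Real.log K₂ + τ * Real.log R) := by
  intro z hz hfz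
  have hz0 : (0:ℝ) < ‖z‖ := lt_trans hr hz.1
  have hfz0 : (0:ℝ) < ‖f z‖ := by
    simpa [norm_pos_iff] using hfz
  -- Step 1: max-modulus bound on a sub-annulus
  have step1 : ∀ (q : ℕ) (p : ℤ) (ε : ℝ), 0 < ε → ∀ δ : ℝ, 0 < δ →
      (∀ w ∈ annulus r R, (‖w‖ < r + δ → ‖f w‖ ≤ K₁ + ε) ∧
        (R - δ < ‖w‖ → ‖f w‖ ≤ K₂ + ε)) →
      ∀ a b : ℝ, r < a → a ≤ ‖z‖ → ‖z‖ ≤ b → b < R →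
        a < r + δ → R - δ < b →
      ‖f z‖ ^ q * ‖z‖ ^ p ≤
        max ((K₁+ε)^q * a^p) ((K₂+ε)^q * b^p) := by
    intro q p ε hε δ hδ hδ' a b ha haz hzb hb ha' hb'
    have ha0 : (0:ℝ) < a := lt_trans hr ha
    have hb0 : (0:ℝ) < b := lt_of_lt_of_le ha0 (le_trans haz hzb)
    have h1 : ‖f z‖ ^ q * ‖z‖ ^ p = ‖f z ^ q * z ^ p‖ := by
      rw [norm_mul, norm_pow, norm_zpow]
    rw [h1]
    refine maxmod (F := fun w => f w ^ q * w ^ p) (isOpen_annulus r R) ?_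
      (fun w hw => ⟨lt_of_lt_of_le ha hw.1,
        lt_of_le_of_lt hw.2 hb⟩) ?_ haz hzb
    · refine (hf.pow q).mul (fun w hw => ?_)
      have hw0 : w ≠ 0 := by
        intro h
        rw [h] at hw
        simp only [annulus, mem_setOf_eq, norm_zero] at hw
        exact absurd (lt_trans hr hw.1) (lt_irrefl 0)
      exact (differentiableAt_zpow.mpr (Or.inl hw0)).differentiableWithinAt
    · intro w hw
      rcases hw with hw | hw
      · have hwA : w ∈ annulus r R := ⟨by rw [hw]; exact ha,
          by rw [hw]; exact lt_of_le_of_lt (le_trans haz hzb) hb⟩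
        have hfw : ‖f w‖ ≤ K₁ + ε :=
          (hδ' w hwA).1 (by rw [hw]; exact ha')
        rw [norm_mul, norm_pow, norm_zpow, hw]
        refine le_max_of_le_left ?_
        exact mul_le_mul_of_nonneg_right
          (pow_le_pow_left₀ (norm_nonneg _) hfw q) (zpow_nonneg ha0.le p)
      · have hwA : w ∈ annulus r R := ⟨by rw [hw]; exact lt_of_lt_of_le ha (le_trans haz hzb),
          by rw [hw]; exact hb⟩
        have hfw : ‖f w‖ ≤ K₂ + ε :=
          (hδ' w hwA).2 (by rw [hw]; exact hb')
        rw [norm_mul, norm_pow, norm_zpow, hw]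
        refine le_max_of_le_right ?_
        exact mul_le_mul_of_nonneg_right
          (pow_le_pow_left₀ (norm_nonneg _) hfw q) (zpow_nonneg hb0.le p)
  -- Step 2: limit a → r, b → R
  have step2 : ∀ (q : ℕ) (p : ℤ) (ε : ℝ), 0 < ε →
      ‖f z‖ ^ q * ‖z‖ ^ p ≤
        max ((K₁+ε)^q * r^p) ((K₂+ε)^q * R^p) := by
    intro q p ε hε
    obtain ⟨δ, hδ, hδ'⟩ := hbd ε hε
    -- first limit in a (with b fixed), inside a limit in b
    have keyb : ∀ b : ℝ, ‖z‖ ≤ b → b < R → R - δ < b →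
        ‖f z‖ ^ q * ‖z‖ ^ p ≤
          max ((K₁+ε)^q * r^p) ((K₂+ε)^q * b^p) := by
      intro b hzb hb hb'
      have hlim : Tendsto (fun a : ℝ => max ((K₁+ε)^q * a^p) ((K₂+ε)^q * b^p))
          (nhdsWithin r (Ioi r)) (nhds (max ((K₁+ε)^q * r^p) ((K₂+ε)^q * b^p))) := by
        refine Tendsto.mono_left ?_ nhdsWithin_le_nhds
        exact (((continuousAt_zpow₀ r p (Or.inl hr.ne')).const_mul _).max continuousAt_const)
      refine ge_of_tendsto hlim ?_
      have hmem : Ioo r (min (r + δ) (‖z‖)) ∈ nhdsWithin r (Ioi r) := by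
        refine Ioo_mem_nhdsGT_of_mem ⟨le_refl r, ?_⟩
        exact lt_min (by linarith) hz.1
      filter_upwards [hmem] with a ha
      exact step1 q p ε hε δ hδ hδ' a b ha.1 (le_of_lt (lt_of_lt_of_le ha.2 (min_le_right _ _)))
        hzb hb (lt_of_lt_of_le ha.2 (min_le_left _ _)) hb'
    have hlim : Tendsto (fun b : ℝ => max ((K₁+ε)^q * r^p) ((K₂+ε)^q * b^p))
        (nhdsWithin R (Iio R)) (nhds (max ((K₁+ε)^q * r^p) ((K₂+ε)^q * R^p))) := by
      refine Tendsto.mono_left ?_ nhdsWithin_le_nhds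
      exact (continuousAt_const.max ((continuousAt_zpow₀ R p
        (Or.inl (lt_trans hr hrR).ne')).const_mul _))
    refine ge_of_tendsto hlim ?_
    have hmem : Ioo (max (R - δ) (‖z‖)) R ∈ nhdsWithin R (Iio R) := by
      refine Ioo_mem_nhdsLT_of_mem ⟨?_, le_refl R⟩
      exact max_lt (by linarith) hz.2
    filter_upwards [hmem] with b hb
    exact keyb b (le_of_lt (lt_of_le_of_lt (le_max_right _ _) hb.1)) hb.2
      (lt_of_le_of_lt (le_max_left _ _) hb.1)
  -- Step 3: take logs and let ε → 0
  have step3 : ∀ (q : ℕ) (p : ℤ),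
      (q:ℝ) * Real.log (‖f z‖) + (p:ℝ) * Real.log (‖z‖) ≤
        max ((q:ℝ) * Real.log K₁ + (p:ℝ) * Real.log r)
            ((q:ℝ) * Real.log K₂ + (p:ℝ) * Real.log R) := by
    intro q p
    have step2' : ∀ ε : ℝ, 0 < ε →
        (q:ℝ) * Real.log (‖f z‖) + (p:ℝ) * Real.log (‖z‖) ≤
          max ((q:ℝ) * Real.log (K₁+ε) + (p:ℝ) * Real.log r)
              ((q:ℝ) * Real.log (K₂+ε) + (p:ℝ) * Real.log R) := by
      intro ε hε
      have h := step2 q p ε hε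
      have hL : (0:ℝ) < ‖f z‖ ^ q * ‖z‖ ^ p := by positivity
      have hlog := Real.log_le_log hL h
      rcases le_total ((K₁+ε)^q * r^p) ((K₂+ε)^q * R^p) with hc | hc
      · rw [max_eq_right hc] at hlog
        refine le_max_of_le_right ?_
        calc (q:ℝ) * Real.log (‖f z‖) + (p:ℝ) * Real.log (‖z‖)
            = Real.log (‖f z‖ ^ q * ‖z‖ ^ p) := by
              rw [Real.log_mul (by positivity) (zpow_ne_zero _ (by positivity)), Real.log_pow, Real.log_zpow]
          _ ≤ Real.log ((K₂+ε)^q * R^p) := hlog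
          _ = (q:ℝ) * Real.log (K₂+ε) + (p:ℝ) * Real.log R := by
              rw [Real.log_mul (by positivity) (zpow_ne_zero _ (lt_trans hr hrR).ne'), Real.log_pow, Real.log_zpow]
      · rw [max_eq_left hc] at hlog
        refine le_max_of_le_left ?_
        calc (q:ℝ) * Real.log (‖f z‖) + (p:ℝ) * Real.log (‖z‖)
            = Real.log (‖f z‖ ^ q * ‖z‖ ^ p) := by
              rw [Real.log_mul (by positivity) (zpow_ne_zero _ (by positivity)), Real.log_pow, Real.log_zpow]
          _ ≤ Real.log ((K₁+ε)^q * r^p) := hlog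
          _ = (q:ℝ) * Real.log (K₁+ε) + (p:ℝ) * Real.log r := by
              rw [Real.log_mul (by positivity) (zpow_ne_zero _ (by positivity)), Real.log_pow, Real.log_zpow]
    have hlim : Tendsto (fun ε : ℝ =>
        max ((q:ℝ) * Real.log (K₁+ε) + (p:ℝ) * Real.log r)
            ((q:ℝ) * Real.log (K₂+ε) + (p:ℝ) * Real.log R))
        (nhdsWithin 0 (Ioi 0)) (nhds (max ((q:ℝ) * Real.log K₁ + (p:ℝ) * Real.log r)
            ((q:ℝ) * Real.log K₂ + (p:ℝ) * Real.log R))) := by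
      refine Tendsto.mono_left ?_ nhdsWithin_le_nhds
      have h1 : ContinuousAt (fun ε : ℝ => Real.log (K₁+ε)) 0 := by
        have := (Real.continuousAt_log (x := K₁ + 0) (by simpa using hK₁.ne')).comp
          (continuousAt_const.add continuousAt_id)
        simpa [Function.comp_def] using this
      have h2 : ContinuousAt (fun ε : ℝ => Real.log (K₂+ε)) 0 := by
        have := (Real.continuousAt_log (x := K₂ + 0) (by simpa using hK₂.ne')).comp
          (continuousAt_const.add continuousAt_id)
        simpa [Function.comp_def] using this
      have : ContinuousAt (fun ε : ℝ =>
          max ((q:ℝ) * Real.log (K₁+ε) + (p:ℝ) * Real.log r)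
              ((q:ℝ) * Real.log (K₂+ε) + (p:ℝ) * Real.log R)) 0 :=
        ((h1.const_mul _).add continuousAt_const).max ((h2.const_mul _).add continuousAt_const)
      simpa using this.tendsto
    refine ge_of_tendsto hlim ?_
    filter_upwards [self_mem_nhdsWithin] with ε hε
    exact step2' ε hε
  -- Step 4: rationals, then all reals by density
  intro τ
  set C := {τ : ℝ | Real.log (‖f z‖) + τ * Real.log (‖z‖) ≤
      max (Real.log K₁ + τ * Real.log r) (Real.log K₂ + τ * Real.log R)} with hC
  have hclosed : IsClosed C := by
    refine isClosed_le ?_ ?_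
    · exact continuous_const.add (continuous_id.mul continuous_const)
    · exact (continuous_const.add (continuous_id.mul continuous_const)).max
        (continuous_const.add (continuous_id.mul continuous_const))
  have hrat : ∀ x : ℚ, (x:ℝ) ∈ C := by
    intro x
    have hq : (0:ℝ) < (x.den : ℝ) := by exact_mod_cast x.pos
    have h := step3 x.den x.num
    have hcast : (x:ℝ) = (x.num : ℝ) / (x.den : ℝ) := by
      rw [Rat.cast_def]
    have hdx : (x.den:ℝ) * (x:ℝ) = (x.num:ℝ) := by
      rw [hcast]; field_simp
    simp only [hC, mem_setOf_eq]
    rcases le_max_iff.mp h with h' | h'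
    · refine le_max_of_le_left (le_of_mul_le_mul_left ?_ hq)
      calc (x.den:ℝ) * (Real.log (‖f z‖) + (x:ℝ) * Real.log (‖z‖))
          = (x.den:ℝ) * Real.log (‖f z‖) +
            ((x.den:ℝ) * (x:ℝ)) * Real.log (‖z‖) := by ring
        _ = (x.den:ℝ) * Real.log (‖f z‖) +
            (x.num:ℝ) * Real.log (‖z‖) := by rw [hdx]
        _ ≤ (x.den:ℝ) * Real.log K₁ + (x.num:ℝ) * Real.log r := h'
        _ = (x.den:ℝ) * Real.log K₁ + ((x.den:ℝ) * (x:ℝ)) * Real.log r := by rw [hdx]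
        _ = (x.den:ℝ) * (Real.log K₁ + (x:ℝ) * Real.log r) := by ring
    · refine le_max_of_le_right (le_of_mul_le_mul_left ?_ hq)
      calc (x.den:ℝ) * (Real.log (‖f z‖) + (x:ℝ) * Real.log (‖z‖))
          = (x.den:ℝ) * Real.log (‖f z‖) +
            ((x.den:ℝ) * (x:ℝ)) * Real.log (‖z‖) := by ring
        _ = (x.den:ℝ) * Real.log (‖f z‖) +
            (x.num:ℝ) * Real.log (‖z‖) := by rw [hdx]
        _ ≤ (x.den:ℝ) * Real.log K₂ + (x.num:ℝ) * Real.log R := h'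
        _ = (x.den:ℝ) * Real.log K₂ + ((x.den:ℝ) * (x:ℝ)) * Real.log R := by rw [hdx]
        _ = (x.den:ℝ) * (Real.log K₂ + (x:ℝ) * Real.log R) := by ring
  have : C = univ := by
    have hdense : Dense (range ((↑) : ℚ → ℝ)) := Rat.denseRange_cast
    have : closure (range ((↑) : ℚ → ℝ)) ⊆ C := by
      rw [← hclosed.closure_eq]
      exact closure_mono (by rintro _ ⟨x, rfl⟩; exact hrat x)
    rw [hdense.closure_eq] at this
    exact univ_subset_iff.mp this
  have hτ : τ ∈ C := by rw [this]; trivial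
  exact hτ

/-- If `|f| = c|z|^t` on the annulus, then `z f'(z) = t f(z)`. -/
lemma deriv_eq {f : ℂ → ℂ} {r R t c : ℝ} (hr : 0 < r) (hc : 0 < c)
    (hf : DifferentiableOn ℂ f (annulus r R))
    (habs : ∀ z ∈ annulus r R, ‖f z‖ = c * ‖z‖ ^ t) :
    ∀ z ∈ annulus r R, z * deriv f z = (t : ℂ) * f z := by
  intro z₀ hz₀
  have hz0 : (0:ℝ) < ‖z₀‖ := lt_trans hr hz₀.1
  have hF : ‖f z₀‖ = c * ‖z₀‖ ^ t := habs z₀ hz₀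
  have hF0 : f z₀ ≠ 0 := by
    intro h
    rw [h, norm_zero] at hF
    exact absurd hF.symm (ne_of_gt (by positivity))
  have hd : DifferentiableAt ℂ f z₀ :=
    hf.differentiableAt ((isOpen_annulus r R).mem_nhds hz₀)
  set D := deriv f z₀ with hD
  set F := f z₀ with hFdef
  -- derivative of s ↦ f(s z₀) (real s) at s = 1
  have hin : HasDerivAt (fun y : ℂ => f (y * z₀)) (D * z₀) 1 := by
    have h1 : HasDerivAt (fun y : ℂ => y * z₀) z₀ 1 := by
      simpa using (hasDerivAt_id (1:ℂ)).mul_const z₀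
    have h2 : HasDerivAt f D ((1:ℂ) * z₀) := by rw [one_mul]; exact hd.hasDerivAt
    simpa [Function.comp_def] using h2.comp 1 h1
  have hw : HasDerivAt (fun s : ℝ => f ((s:ℂ) * z₀)) (D * z₀) 1 := by
    have hin' : HasDerivAt (fun y : ℂ => f (y * z₀)) (D * z₀) ((1:ℝ):ℂ) := by
      simpa using hin
    exact hin'.comp_ofReal
  -- derivative of θ ↦ f(z₀ exp(θ i)) at θ = 0
  have hin2 : HasDerivAt (fun y : ℂ => f (z₀ * Complex.exp (y * I))) (D * (z₀ * I)) 0 := by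
    have h1 : HasDerivAt (fun y : ℂ => z₀ * Complex.exp (y * I)) (z₀ * I) 0 := by
      have he : HasDerivAt (fun y : ℂ => Complex.exp (y * I)) (Complex.exp ((0:ℂ) * I) * I) 0 := by
        have hi : HasDerivAt (fun y : ℂ => y * I) I 0 := by
          simpa using (hasDerivAt_id (0:ℂ)).mul_const I
        simpa [Function.comp_def] using (Complex.hasDerivAt_exp ((0:ℂ)*I)).comp 0 hi
      have := he.const_mul z₀
      simpa using this
    have h2 : HasDerivAt f D (z₀ * Complex.exp ((0:ℂ) * I)) := by
      have he0 : z₀ * Complex.exp ((0:ℂ) * I) = z₀ := by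
        rw [zero_mul, Complex.exp_zero, mul_one]
      rw [he0]
      exact hd.hasDerivAt
    simpa [mul_comm, mul_assoc, mul_left_comm, Function.comp_def] using h2.comp 0 h1
  have hv : HasDerivAt (fun θ : ℝ => f (z₀ * Complex.exp ((θ:ℂ) * I))) (D * (z₀ * I)) 0 := by
    have hin2' : HasDerivAt (fun y : ℂ => f (z₀ * Complex.exp (y * I))) (D * (z₀ * I)) ((0:ℝ):ℂ) := by
      simpa using hin2
    exact hin2'.comp_ofReal
  -- normSq along a real path
  have normSq_deriv : ∀ (w : ℝ → ℂ) (w' : ℂ) (x : ℝ), HasDerivAt w w' x →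
      HasDerivAt (fun s => Complex.normSq (w s))
        (2 * ((w x).re * w'.re + (w x).im * w'.im)) x := by
    intro w w' x hw
    have hre : HasDerivAt (fun s => (w s).re) w'.re x :=
      (Complex.reCLM.hasFDerivAt.comp_hasDerivAt x hw)
    have him : HasDerivAt (fun s => (w s).im) w'.im x :=
      (Complex.imCLM.hasFDerivAt.comp_hasDerivAt x hw)
    have h := ((hre.mul hre).add (him.mul him))
    have heq : (fun s => (w s).re * (w s).re + (w s).im * (w s).im) =
        fun s => Complex.normSq (w s) := by
      funext s; rw [Complex.normSq_apply]
    rw [← heq]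
    exact h.congr_deriv (by ring)
  -- radial equation
  have hradial : (F.re * (D * z₀).re + F.im * (D * z₀).im) = t * Complex.normSq F := by
    have hφ := normSq_deriv _ _ _ hw
    -- the comparison function
    have hψ : HasDerivAt (fun s : ℝ => c^2 * ‖z₀‖ ^ (2*t) * s ^ (2*t))
        (c^2 * ‖z₀‖ ^ (2*t) * (2*t)) 1 := by
      have := (Real.hasDerivAt_rpow_const (x := (1:ℝ)) (p := 2*t) (Or.inl one_ne_zero))
      have h2 := this.const_mul (c^2 * ‖z₀‖ ^ (2*t))
      simpa [Real.one_rpow] using h2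
    have hev : (fun s : ℝ => Complex.normSq (f ((s:ℂ) * z₀))) =ᶠ[nhds 1]
        (fun s : ℝ => c^2 * ‖z₀‖ ^ (2*t) * s ^ (2*t)) := by
      have hmem : Ioo (r / ‖z₀‖) (R / ‖z₀‖) ∈ nhds (1:ℝ) := by
        refine Ioo_mem_nhds ?_ ?_
        · rw [div_lt_one hz0]; exact hz₀.1
        · rw [lt_div_iff₀ hz0]; simpa using hz₀.2
      filter_upwards [hmem] with s hs
      have hs0 : (0:ℝ) < s := lt_of_le_of_lt (by positivity) hs.1
      have habs' : ‖(s:ℂ) * z₀‖ = s * ‖z₀‖ := by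
        rw [norm_mul, Complex.norm_real, Real.norm_eq_abs, abs_of_pos hs0]
      have hmem' : (s:ℂ) * z₀ ∈ annulus r R := by
        constructor
        · rw [habs']
          have := hs.1
          rw [div_lt_iff₀ hz0] at this
          linarith
        · rw [habs']
          have := hs.2
          rw [lt_div_iff₀ hz0] at this
          linarith
      have := habs _ hmem'
      rw [← Complex.sq_norm, this, habs']
      rw [Real.mul_rpow hs0.le hz0.le]
      rw [mul_pow, mul_pow]
      rw [← Real.rpow_natCast (s ^ t) 2, ← Real.rpow_natCast (‖z₀‖ ^ t) 2,
        ← Real.rpow_mul hs0.le, ← Real.rpow_mul hz0.le]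
      push_cast
      ring_nf
    have hφ' : HasDerivAt (fun s : ℝ => Complex.normSq (f ((s:ℂ) * z₀)))
        (c^2 * ‖z₀‖ ^ (2*t) * (2*t)) 1 := hψ.congr_of_eventuallyEq hev
    have huniq := hφ.unique hφ'
    have hA : c^2 * ‖z₀‖ ^ (2*t) = Complex.normSq F := by
      rw [← Complex.sq_norm, hF]
      rw [mul_pow, ← Real.rpow_natCast (‖z₀‖ ^ t) 2, ← Real.rpow_mul hz0.le]
      push_cast
      ring_nf
    have : (F.re * (D * z₀).re + F.im * (D * z₀).im) =
        c^2 * ‖z₀‖ ^ (2*t) * t := by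
      have h1 : ((1:ℝ):ℂ) * z₀ = z₀ := by push_cast; rw [one_mul]
      rw [h1] at huniq
      linarith [huniq]
    rw [this, hA]
    ring
  -- tangential equation
  have htang : (F.re * (D * (z₀ * I)).re + F.im * (D * (z₀ * I)).im) = 0 := by
    have hχ := normSq_deriv _ _ _ hv
    have hconst : (fun θ : ℝ => Complex.normSq (f (z₀ * Complex.exp ((θ:ℂ) * I)))) =
        fun _ : ℝ => c^2 * ‖z₀‖ ^ (2*t) := by
      funext θ
      have habs' : ‖z₀ * Complex.exp ((θ:ℂ) * I)‖ = ‖z₀‖ := by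
        rw [norm_mul, Complex.norm_exp_ofReal_mul_I, mul_one]
      have hmem' : z₀ * Complex.exp ((θ:ℂ) * I) ∈ annulus r R := by
        constructor
        · rw [habs']; exact hz₀.1
        · rw [habs']; exact hz₀.2
      have := habs _ hmem'
      rw [← Complex.sq_norm, this, habs']
      rw [mul_pow, ← Real.rpow_natCast (‖z₀‖ ^ t) 2, ← Real.rpow_mul hz0.le]
      push_cast
      ring_nf
    have hχ0 : HasDerivAt (fun θ : ℝ => Complex.normSq (f (z₀ * Complex.exp ((θ:ℂ) * I)))) 0 0 := by
      rw [hconst]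
      exact hasDerivAt_const 0 _
    have huniq := hχ.unique hχ0
    have h1 : ((0:ℝ):ℂ) * I = 0 := by push_cast; rw [zero_mul]
    have h2 : z₀ * Complex.exp (((0:ℝ):ℂ) * I) = z₀ := by
      rw [h1, Complex.exp_zero, mul_one]
    rw [h2] at huniq
    linarith [huniq]
  -- combine
  have hA0 : (starRingEnd ℂ) F * (z₀ * D) = (t : ℂ) * Complex.normSq F := by
    apply Complex.ext
    · have h := hradial
      simp only [Complex.mul_re, Complex.mul_im, Complex.conj_re, Complex.conj_im,
        Complex.normSq_apply, Complex.I_re, Complex.I_im, Complex.ofReal_re,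
        Complex.ofReal_im] at h ⊢
      linear_combination h
    · have h := htang
      simp only [Complex.mul_re, Complex.mul_im, Complex.conj_re, Complex.conj_im,
        Complex.normSq_apply, Complex.I_re, Complex.I_im, Complex.ofReal_re,
        Complex.ofReal_im] at h ⊢
      linear_combination -h
  have hconj : (starRingEnd ℂ) F ≠ 0 := by
    simpa using hF0
  have hkey : (starRingEnd ℂ) F * (z₀ * D) = (starRingEnd ℂ) F * ((t:ℂ) * F) := by
    rw [hA0, ← Complex.mul_conj]
    ring
  exact mul_left_cancel₀ hconj hkey

/-- Monodromy: if `z f' = t f` on the annulus with `f` nonvanishing, then `t ∈ ℤ`. -/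
lemma exists_int_of_deriv {f : ℂ → ℂ} {r R t : ℝ} (hr : 0 < r) (hrR : r < R)
    (hf : DifferentiableOn ℂ f (annulus r R))
    (hne : ∀ z ∈ annulus r R, f z ≠ 0)
    (hderiv : ∀ z ∈ annulus r R, z * deriv f z = (t : ℂ) * f z) :
    ∃ n : ℤ, t = (n : ℝ) := by
  set s₀ : ℝ := (r + R) / 2 with hs₀
  have hs₀pos : 0 < s₀ := by rw [hs₀]; linarith
  have hz₀mem : ((s₀ : ℂ)) ∈ annulus r R := by
    constructor <;> rw [Complex.norm_real, Real.norm_eq_abs, abs_of_pos hs₀pos] <;> [skip; skip] <;>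
      simp only [hs₀] <;> linarith
  set z₀ : ℂ := (s₀ : ℂ) with hz₀
  have hφ : ∀ θ : ℝ, HasDerivAt
      (fun θ : ℝ => f (z₀ * Complex.exp ((θ:ℂ) * I)) * Complex.exp (-(t:ℂ) * (θ:ℂ) * I)) 0 θ := by
    intro θ
    set z : ℂ := z₀ * Complex.exp ((θ:ℂ) * I) with hzdef
    have hzmem : z ∈ annulus r R := by
      have habs' : ‖z‖ = ‖z₀‖ := by
        rw [hzdef, norm_mul, Complex.norm_exp_ofReal_mul_I, mul_one]
      constructor
      · rw [habs']; exact hz₀mem.1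
      · rw [habs']; exact hz₀mem.2
    have hd : DifferentiableAt ℂ f z := hf.differentiableAt ((isOpen_annulus r R).mem_nhds hzmem)
    -- derivative of first factor
    have h1C : HasDerivAt (fun y : ℂ => f (z₀ * Complex.exp (y * I)))
        (deriv f z * (z * I)) (θ : ℂ) := by
      have hinner : HasDerivAt (fun y : ℂ => z₀ * Complex.exp (y * I)) (z * I) (θ:ℂ) := by
        have hi : HasDerivAt (fun y : ℂ => y * I) I (θ:ℂ) := by
          simpa using (hasDerivAt_id ((θ:ℝ):ℂ)).mul_const I
        have he := (Complex.hasDerivAt_exp (((θ:ℝ):ℂ)*I)).comp ((θ:ℝ):ℂ) hi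
        have := he.const_mul z₀
        rw [hzdef]
        exact this.congr_deriv (by ring)
      have hfz : HasDerivAt f (deriv f z) (z₀ * Complex.exp (((θ:ℝ):ℂ) * I)) := by
        rw [← hzdef]; exact hd.hasDerivAt
      exact hfz.comp ((θ:ℝ):ℂ) hinner
    have h1 : HasDerivAt (fun θ : ℝ => f (z₀ * Complex.exp ((θ:ℂ) * I)))
        (deriv f z * (z * I)) θ := by
      exact h1C.comp_ofReal
    -- derivative of second factor
    have h2C : HasDerivAt (fun y : ℂ => Complex.exp (-(t:ℂ) * y * I))
        (-(t:ℂ) * I * Complex.exp (-(t:ℂ) * (θ:ℂ) * I)) (θ:ℂ) := by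
      have hi : HasDerivAt (fun y : ℂ => -(t:ℂ) * y * I) (-(t:ℂ) * I) (θ:ℂ) := by
        have : (fun y : ℂ => -(t:ℂ) * y * I) = fun y : ℂ => y * (-(t:ℂ) * I) := by
          funext y; ring
        rw [this]
        simpa using (hasDerivAt_id ((θ:ℝ):ℂ)).mul_const (-(t:ℂ) * I)
      have := (Complex.hasDerivAt_exp (-(t:ℂ)*(θ:ℂ)*I)).comp ((θ:ℝ):ℂ) hi
      exact this.congr_deriv (by ring)
    have h2 : HasDerivAt (fun θ : ℝ => Complex.exp (-(t:ℂ) * (θ:ℂ) * I))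
        (-(t:ℂ) * I * Complex.exp (-(t:ℂ) * (θ:ℂ) * I)) θ := by
      exact h2C.comp_ofReal
    have hmul := h1.mul h2
    have hzero : deriv f z * (z * I) * Complex.exp (-(t:ℂ) * (θ:ℂ) * I) +
        f (z₀ * Complex.exp ((θ:ℂ) * I)) * (-(t:ℂ) * I * Complex.exp (-(t:ℂ) * (θ:ℂ) * I)) = 0 := by
      have h := hderiv z hzmem
      rw [← hzdef]
      linear_combination I * Complex.exp (-(t:ℂ) * (θ:ℂ) * I) * h
    rw [hzero] at hmul
    exact hmul
  have hconst : (fun θ : ℝ => f (z₀ * Complex.exp ((θ:ℂ) * I)) * Complex.exp (-(t:ℂ) * (θ:ℂ) * I))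
      (2 * Real.pi) =
      (fun θ : ℝ => f (z₀ * Complex.exp ((θ:ℂ) * I)) * Complex.exp (-(t:ℂ) * (θ:ℂ) * I)) 0 :=
    is_const_of_deriv_eq_zero (fun θ => (hφ θ).differentiableAt)
      (fun θ => (hφ θ).deriv) _ _
  simp only at hconst
  have hexp1 : Complex.exp (((2 * Real.pi : ℝ) : ℂ) * I) = 1 := by
    push_cast
    exact Complex.exp_two_pi_mul_I
  rw [hexp1] at hconst
  simp only [Complex.ofReal_zero, zero_mul, mul_zero, Complex.exp_zero, mul_one] at hconst
  have hfz₀ : f z₀ ≠ 0 := hne z₀ hz₀mem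
  have hexp : Complex.exp (-(t:ℂ) * ((2 * Real.pi : ℝ) : ℂ) * I) = 1 :=
    mul_left_cancel₀ hfz₀ (by rw [hconst, mul_one])
  obtain ⟨n, hn⟩ := Complex.exp_eq_one_iff.mp hexp
  refine ⟨-n, ?_⟩
  have h2πI : (2 * (Real.pi:ℂ) * I) ≠ 0 := by
    simp [Complex.I_ne_zero, Real.pi_ne_zero]
  have : (t : ℂ) = ((-n : ℤ) : ℂ) := by
    have heq : -(t:ℂ) * (2 * (Real.pi:ℂ) * I) = (n:ℂ) * (2 * (Real.pi:ℂ) * I) := by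
      push_cast at hn ⊢
      linear_combination hn
    have := mul_right_cancel₀ h2πI heq
    push_cast
    linear_combination -this
  exact_mod_cast Complex.ofReal_inj.mp (by push_cast at this ⊢; exact this)

/-- Properness: near the boundary of the source annulus, `f` is near the boundary of the
target annulus. -/
lemma boundary_escape {f g : ℂ → ℂ} {r₁ R₁ r₂ R₂ : ℝ} (hr₁ : 0 < r₁) (hR₁ : r₁ < R₁)
    (hg : DifferentiableOn ℂ g (annulus r₂ R₂))
    (hmapsg : Set.MapsTo g (annulus r₂ R₂) (annulus r₁ R₁))
    (hgf : ∀ z ∈ annulus r₁ R₁, g (f z) = z) :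
    ∀ ε > 0, ∃ δ > 0, ∀ z ∈ annulus r₁ R₁,
      (‖z‖ < r₁ + δ ∨ R₁ - δ < ‖z‖) →
      (‖f z‖ < r₂ + ε ∨ R₂ - ε < ‖f z‖) := by
  intro ε hε
  set CA : Set ℂ := {w : ℂ | r₂ + ε ≤ ‖w‖ ∧ ‖w‖ ≤ R₂ - ε} with hCA
  have hCAsub : CA ⊆ annulus r₂ R₂ := fun w hw =>
    ⟨lt_of_lt_of_le (by linarith) hw.1, lt_of_le_of_lt hw.2 (by linarith)⟩
  have hCAcl : IsClosed CA := by
    have : CA = norm ⁻¹' (Icc (r₂ + ε) (R₂ - ε)) := rfl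
    rw [this]; exact isClosed_Icc.preimage continuous_norm
  have hCAcpt : IsCompact CA := by
    refine Metric.isCompact_of_isClosed_isBounded hCAcl ?_
    refine (Metric.isBounded_closedBall (x := (0:ℂ)) (r := R₂ - ε)).subset ?_
    intro w hw
    simpa [Complex.dist_eq] using hw.2
  set K : Set ℂ := g '' CA with hK
  have hKcpt : IsCompact K := hCAcpt.image_of_continuousOn (hg.continuousOn.mono hCAsub)
  have hKsub : K ⊆ annulus r₁ R₁ := by
    rintro _ ⟨w, hw, rfl⟩; exact hmapsg (hCAsub hw)
  have hδ : ∃ δ > 0, ∀ z ∈ K, r₁ + δ ≤ ‖z‖ ∧ ‖z‖ ≤ R₁ - δ := by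
    rcases eq_empty_or_nonempty K with hKe | hKne
    · exact ⟨1, one_pos, by rw [hKe]; simp⟩
    set L : Set ℝ := norm '' K with hL
    have hLcpt : IsCompact L := hKcpt.image continuous_norm
    have hLne : L.Nonempty := hKne.image _
    have hmmem : sInf L ∈ L := hLcpt.sInf_mem hLne
    have hMmem : sSup L ∈ L := hLcpt.sSup_mem hLne
    obtain ⟨zm, hzm, hzm'⟩ := hmmem
    obtain ⟨zM, hzM, hzM'⟩ := hMmem
    have h1 : r₁ < sInf L := by rw [← hzm']; exact (hKsub hzm).1
    have h2 : sSup L < R₁ := by rw [← hzM']; exact (hKsub hzM).2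
    refine ⟨min (sInf L - r₁) (R₁ - sSup L), lt_min (by linarith) (by linarith), ?_⟩
    intro z hz
    have hmem : ‖z‖ ∈ L := ⟨z, hz, rfl⟩
    have hle : sInf L ≤ ‖z‖ := csInf_le hLcpt.bddBelow hmem
    have hge : ‖z‖ ≤ sSup L := le_csSup hLcpt.bddAbove hmem
    constructor
    · have : min (sInf L - r₁) (R₁ - sSup L) ≤ sInf L - r₁ := min_le_left _ _
      linarith
    · have : min (sInf L - r₁) (R₁ - sSup L) ≤ R₁ - sSup L := min_le_right _ _
      linarith
  obtain ⟨δ, hδpos, hδ'⟩ := hδ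
  refine ⟨δ, hδpos, fun z hz hnear => ?_⟩
  by_contra hcon
  push_neg at hcon
  have hfCA : f z ∈ CA := ⟨hcon.1, hcon.2⟩
  have hzK : z ∈ K := ⟨f z, hfCA, hgf z hz⟩
  have := hδ' z hzK
  rcases hnear with h | h
  · linarith [this.1]
  · linarith [this.2]


/-- The boundary dichotomy: `f` either preserves or swaps the boundary components. -/
lemma dichotomy {f g : ℂ → ℂ} {r₁ R₁ r₂ R₂ : ℝ} (hr₁ : 0 < r₁) (hR₁ : r₁ < R₁)
    (hr₂ : 0 < r₂) (hR₂ : r₂ < R₂)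
    (hf : DifferentiableOn ℂ f (annulus r₁ R₁))
    (hg : DifferentiableOn ℂ g (annulus r₂ R₂))
    (hmapsf : Set.MapsTo f (annulus r₁ R₁) (annulus r₂ R₂))
    (hmapsg : Set.MapsTo g (annulus r₂ R₂) (annulus r₁ R₁))
    (hgf : ∀ z ∈ annulus r₁ R₁, g (f z) = z) :
    (∀ ε > 0, ∃ δ > 0, ∀ z ∈ annulus r₁ R₁,
       (‖z‖ < r₁ + δ → ‖f z‖ ≤ r₂ + ε) ∧
       (R₁ - δ < ‖z‖ → R₂ - ε ≤ ‖f z‖)) ∨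
    (∀ ε > 0, ∃ δ > 0, ∀ z ∈ annulus r₁ R₁,
       (‖z‖ < r₁ + δ → R₂ - ε ≤ ‖f z‖) ∧
       (R₁ - δ < ‖z‖ → ‖f z‖ ≤ r₂ + ε)) := by
  have hesc := boundary_escape hr₁ hR₁ hg hmapsg hgf
  set εb : ℝ := (R₂ - r₂) / 4 with hεb
  have hεbpos : 0 < εb := by rw [hεb]; linarith
  obtain ⟨δb, hδbpos, hδb⟩ := hesc εb hεbpos
  -- the near-boundary collars
  set Nin : Set ℂ := annulus r₁ (min (r₁ + δb) R₁) with hNin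
  set Nout : Set ℂ := annulus (max (R₁ - δb) r₁) R₁ with hNout
  have hNinsub : Nin ⊆ annulus r₁ R₁ := fun z hz =>
    ⟨hz.1, lt_of_lt_of_le hz.2 (min_le_right _ _)⟩
  have hNoutsub : Nout ⊆ annulus r₁ R₁ := fun z hz =>
    ⟨lt_of_le_of_lt (le_max_right _ _) hz.1, hz.2⟩
  have hNinconn : IsConnected Nin :=
    isConnected_annulus hr₁.le (lt_min (by linarith) hR₁)
  have hNoutconn : IsConnected Nout :=
    isConnected_annulus (le_trans hr₁.le (le_max_right _ _)) (max_lt (by linarith) hR₁)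
  have hdisj : Disjoint (Iio (r₂ + εb)) (Ioi (R₂ - εb)) := by
    rw [Set.disjoint_left]
    intro x hx hx'
    simp only [mem_Iio, mem_Ioi] at hx hx'
    rw [hεb] at hx hx'
    linarith
  -- inner collar: image of |f| lands in one side
  have hinor : ((norm ∘ f) '' Nin ⊆ Iio (r₂ + εb)) ∨
      ((norm ∘ f) '' Nin ⊆ Ioi (R₂ - εb)) := by
    refine IsPreconnected.subset_or_subset isOpen_Iio isOpen_Ioi hdisj ?_
      (hNinconn.image _ (continuous_norm.comp_continuousOn
        (hf.continuousOn.mono hNinsub))).isPreconnected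
    rintro _ ⟨z, hz, rfl⟩
    have := hδb z (hNinsub hz) (Or.inl (lt_of_lt_of_le hz.2 (min_le_left _ _)))
    rcases this with h | h
    · exact Or.inl h
    · exact Or.inr h
  have houtor : ((norm ∘ f) '' Nout ⊆ Iio (r₂ + εb)) ∨
      ((norm ∘ f) '' Nout ⊆ Ioi (R₂ - εb)) := by
    refine IsPreconnected.subset_or_subset isOpen_Iio isOpen_Ioi hdisj ?_
      (hNoutconn.image _ (continuous_norm.comp_continuousOn
        (hf.continuousOn.mono hNoutsub))).isPreconnected
    rintro _ ⟨z, hz, rfl⟩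
    have := hδb z (hNoutsub hz) (Or.inr (lt_of_le_of_lt (le_max_left _ _) hz.1))
    rcases this with h | h
    · exact Or.inl h
    · exact Or.inr h
  -- propagation of the four cases
  have hinlow : ((norm ∘ f) '' Nin ⊆ Iio (r₂ + εb)) →
      ∀ ε > 0, ∃ δ > 0, ∀ z ∈ annulus r₁ R₁,
        ‖z‖ < r₁ + δ → ‖f z‖ ≤ r₂ + ε := by
    intro hS ε hε
    obtain ⟨δ', hδ'pos, hδ'⟩ := hesc (min ε εb) (lt_min hε hεbpos)
    refine ⟨min δ' δb, lt_min hδ'pos hδbpos, fun z hz hzn => ?_⟩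
    have hzin : z ∈ Nin := ⟨hz.1, lt_min
      (lt_of_lt_of_le hzn (by simp [min_le_right])) hz.2⟩
    have h1 : ‖f z‖ < r₂ + εb := hS ⟨z, hzin, rfl⟩
    have h2 := hδ' z hz (Or.inl (lt_of_lt_of_le hzn (by simp [min_le_left])))
    rcases h2 with h | h
    · have : min ε εb ≤ ε := min_le_left _ _
      linarith
    · exfalso
      have : min ε εb ≤ εb := min_le_right _ _
      linarith [hεb.le, hεb.ge]
  have hinhigh : ((norm ∘ f) '' Nin ⊆ Ioi (R₂ - εb)) →
      ∀ ε > 0, ∃ δ > 0, ∀ z ∈ annulus r₁ R₁,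
        ‖z‖ < r₁ + δ → R₂ - ε ≤ ‖f z‖ := by
    intro hS ε hε
    obtain ⟨δ', hδ'pos, hδ'⟩ := hesc (min ε εb) (lt_min hε hεbpos)
    refine ⟨min δ' δb, lt_min hδ'pos hδbpos, fun z hz hzn => ?_⟩
    have hzin : z ∈ Nin := ⟨hz.1, lt_min
      (lt_of_lt_of_le hzn (by simp [min_le_right])) hz.2⟩
    have h1 : R₂ - εb < ‖f z‖ := hS ⟨z, hzin, rfl⟩
    have h2 := hδ' z hz (Or.inl (lt_of_lt_of_le hzn (by simp [min_le_left])))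
    rcases h2 with h | h
    · exfalso
      have : min ε εb ≤ εb := min_le_right _ _
      linarith [hεb.le, hεb.ge]
    · have : min ε εb ≤ ε := min_le_left _ _
      linarith
  have houtlow : ((norm ∘ f) '' Nout ⊆ Iio (r₂ + εb)) →
      ∀ ε > 0, ∃ δ > 0, ∀ z ∈ annulus r₁ R₁,
        R₁ - δ < ‖z‖ → ‖f z‖ ≤ r₂ + ε := by
    intro hS ε hε
    obtain ⟨δ', hδ'pos, hδ'⟩ := hesc (min ε εb) (lt_min hε hεbpos)
    refine ⟨min δ' δb, lt_min hδ'pos hδbpos, fun z hz hzn => ?_⟩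
    have hzout : z ∈ Nout := ⟨max_lt (by
      have : min δ' δb ≤ δb := min_le_right _ _
      linarith) hz.1, hz.2⟩
    have h1 : ‖f z‖ < r₂ + εb := hS ⟨z, hzout, rfl⟩
    have h2 := hδ' z hz (Or.inr (by
      have : min δ' δb ≤ δ' := min_le_left _ _
      linarith))
    rcases h2 with h | h
    · have : min ε εb ≤ ε := min_le_left _ _
      linarith
    · exfalso
      have : min ε εb ≤ εb := min_le_right _ _
      linarith [hεb.le, hεb.ge]
  have houthigh : ((norm ∘ f) '' Nout ⊆ Ioi (R₂ - εb)) →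
      ∀ ε > 0, ∃ δ > 0, ∀ z ∈ annulus r₁ R₁,
        R₁ - δ < ‖z‖ → R₂ - ε ≤ ‖f z‖ := by
    intro hS ε hε
    obtain ⟨δ', hδ'pos, hδ'⟩ := hesc (min ε εb) (lt_min hε hεbpos)
    refine ⟨min δ' δb, lt_min hδ'pos hδbpos, fun z hz hzn => ?_⟩
    have hzout : z ∈ Nout := ⟨max_lt (by
      have : min δ' δb ≤ δb := min_le_right _ _
      linarith) hz.1, hz.2⟩
    have h1 : R₂ - εb < ‖f z‖ := hS ⟨z, hzout, rfl⟩
    have h2 := hδ' z hz (Or.inr (by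
      have : min δ' δb ≤ δ' := min_le_left _ _
      linarith))
    rcases h2 with h | h
    · exfalso
      have : min ε εb ≤ εb := min_le_right _ _
      linarith [hεb.le, hεb.ge]
    · have : min ε εb ≤ ε := min_le_left _ _
      linarith
  -- the midpoint
  set s₀ : ℝ := (r₁ + R₁) / 2 with hs₀
  have hs₀pos : 0 < s₀ := by rw [hs₀]; linarith
  have hz₀mem : ((s₀ : ℂ)) ∈ annulus r₁ R₁ := by
    constructor <;> rw [Complex.norm_real, Real.norm_eq_abs, abs_of_pos hs₀pos] <;> rw [hs₀] <;> linarith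
  have habs₀ : ‖(s₀:ℂ)‖ = s₀ := by
    rw [Complex.norm_real, Real.norm_eq_abs, abs_of_pos hs₀pos]
  -- exclusion: not both low
  have hnotlow : ¬ ((∀ ε > 0, ∃ δ > 0, ∀ z ∈ annulus r₁ R₁,
        ‖z‖ < r₁ + δ → ‖f z‖ ≤ r₂ + ε) ∧
      (∀ ε > 0, ∃ δ > 0, ∀ z ∈ annulus r₁ R₁,
        R₁ - δ < ‖z‖ → ‖f z‖ ≤ r₂ + ε)) := by
    rintro ⟨hlow1, hlow2⟩
    have hbnd : ∀ ε > 0, ‖f (s₀:ℂ)‖ ≤ r₂ + ε := by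
      intro ε hε
      obtain ⟨δi, hδipos, hδi⟩ := hlow1 ε hε
      obtain ⟨δo, hδopos, hδo⟩ := hlow2 ε hε
      set a : ℝ := (r₁ + min (r₁ + δi) s₀) / 2 with ha
      set b : ℝ := (R₁ + max (R₁ - δo) s₀) / 2 with hb
      have ha1 : r₁ < a := by
        rw [ha]
        have h1 : r₁ < min (r₁ + δi) s₀ := lt_min (by linarith) (by rw [hs₀]; linarith)
        linarith
      have ha2 : a < r₁ + δi := by
        rw [ha]
        have := min_le_left (r₁ + δi) s₀
        linarith
      have ha3 : a ≤ s₀ := by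
        rw [ha]
        have := min_le_right (r₁ + δi) s₀
        have h1 : r₁ < s₀ := by rw [hs₀]; linarith
        linarith
      have hb1 : b < R₁ := by
        rw [hb]
        have h1 : max (R₁ - δo) s₀ < R₁ := max_lt (by linarith) (by rw [hs₀]; linarith)
        linarith
      have hb2 : R₁ - δo < b := by
        rw [hb]
        have := le_max_left (R₁ - δo) s₀
        linarith
      have hb3 : s₀ ≤ b := by
        rw [hb]
        have := le_max_right (R₁ - δo) s₀
        have h1 : s₀ < R₁ := by rw [hs₀]; linarith
        linarith
      refine maxmod (isOpen_annulus r₁ R₁) hf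
        (fun w hw => ⟨lt_of_lt_of_le ha1 hw.1, lt_of_le_of_lt hw.2 hb1⟩) ?_
        (by rw [habs₀]; exact ha3) (by rw [habs₀]; exact hb3)
      intro w hw
      rcases hw with hw | hw
      · have hwA : w ∈ annulus r₁ R₁ := ⟨by rw [hw]; exact ha1,
          by rw [hw]; exact lt_of_le_of_lt (le_trans ha3 hb3) hb1⟩
        exact hδi w hwA (by rw [hw]; exact ha2)
      · have hwA : w ∈ annulus r₁ R₁ := ⟨by rw [hw]; exact lt_of_lt_of_le ha1 (le_trans ha3 hb3),
          by rw [hw]; exact hb1⟩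
        exact hδo w hwA (by rw [hw]; exact hb2)
    have h1 : ‖f (s₀:ℂ)‖ ≤ r₂ := le_of_forall_pos_le_add hbnd
    have h2 := (hmapsf hz₀mem).1
    linarith
  -- exclusion: not both high
  have hnothigh : ¬ ((∀ ε > 0, ∃ δ > 0, ∀ z ∈ annulus r₁ R₁,
        ‖z‖ < r₁ + δ → R₂ - ε ≤ ‖f z‖) ∧
      (∀ ε > 0, ∃ δ > 0, ∀ z ∈ annulus r₁ R₁,
        R₁ - δ < ‖z‖ → R₂ - ε ≤ ‖f z‖)) := by
    rintro ⟨hhigh1, hhigh2⟩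
    have hne : ∀ w ∈ annulus r₁ R₁, f w ≠ 0 := by
      intro w hw h0
      have := (hmapsf hw).1
      rw [h0, norm_zero] at this
      linarith
    have hbnd : ∀ ε, 0 < ε → ε < R₂ - r₂ → R₂ - ε ≤ ‖f (s₀:ℂ)‖ := by
      intro ε hε hε'
      obtain ⟨δi, hδipos, hδi⟩ := hhigh1 ε hε
      obtain ⟨δo, hδopos, hδo⟩ := hhigh2 ε hε
      set a : ℝ := (r₁ + min (r₁ + δi) s₀) / 2 with ha
      set b : ℝ := (R₁ + max (R₁ - δo) s₀) / 2 with hb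
      have ha1 : r₁ < a := by
        rw [ha]
        have h1 : r₁ < min (r₁ + δi) s₀ := lt_min (by linarith) (by rw [hs₀]; linarith)
        linarith
      have ha2 : a < r₁ + δi := by
        rw [ha]
        have := min_le_left (r₁ + δi) s₀
        linarith
      have ha3 : a ≤ s₀ := by
        rw [ha]
        have := min_le_right (r₁ + δi) s₀
        have h1 : r₁ < s₀ := by rw [hs₀]; linarith
        linarith
      have hb1 : b < R₁ := by
        rw [hb]
        have h1 : max (R₁ - δo) s₀ < R₁ := max_lt (by linarith) (by rw [hs₀]; linarith)
        linarith
      have hb2 : R₁ - δo < b := by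
        rw [hb]
        have := le_max_left (R₁ - δo) s₀
        linarith
      have hb3 : s₀ ≤ b := by
        rw [hb]
        have := le_max_right (R₁ - δo) s₀
        have h1 : s₀ < R₁ := by rw [hs₀]; linarith
        linarith
      have hRe : 0 < R₂ - ε := by linarith
      have hinv : ‖(f (s₀:ℂ))⁻¹‖ ≤ (R₂ - ε)⁻¹ := by
        refine maxmod (F := fun w => (f w)⁻¹) (isOpen_annulus r₁ R₁) (hf.inv hne)
          (fun w hw => ⟨lt_of_lt_of_le ha1 hw.1, lt_of_le_of_lt hw.2 hb1⟩) ?_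
          (by rw [habs₀]; exact ha3) (by rw [habs₀]; exact hb3)
        intro w hw
        rcases hw with hw | hw
        · have hwA : w ∈ annulus r₁ R₁ := ⟨by rw [hw]; exact ha1,
            by rw [hw]; exact lt_of_le_of_lt (le_trans ha3 hb3) hb1⟩
          have := hδi w hwA (by rw [hw]; exact ha2)
          rw [norm_inv]
          exact inv_anti₀ hRe this
        · have hwA : w ∈ annulus r₁ R₁ :=
            ⟨by rw [hw]; exact lt_of_lt_of_le ha1 (le_trans ha3 hb3), by rw [hw]; exact hb1⟩
          have := hδo w hwA (by rw [hw]; exact hb2)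
          rw [norm_inv]
          exact inv_anti₀ hRe this
      rw [norm_inv] at hinv
      have hfpos : 0 < ‖f (s₀:ℂ)‖ := by
        have := (hmapsf hz₀mem).1
        linarith
      rwa [inv_le_inv₀ hfpos hRe] at hinv
    have h2 := (hmapsf hz₀mem).2
    have hεe : 0 < min ((R₂ - ‖f (s₀:ℂ)‖) / 2) ((R₂ - r₂) / 2) := by
      refine lt_min (by linarith) (by linarith)
    have := hbnd _ hεe (lt_of_le_of_lt (min_le_right _ _) (by linarith))
    have hh := min_le_left ((R₂ - ‖f (s₀:ℂ)‖) / 2) ((R₂ - r₂) / 2)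
    linarith
  -- combine
  rcases hinor with hin | hin
  · rcases houtor with hout | hout
    · exact absurd ⟨hinlow hin, houtlow hout⟩ hnotlow
    · left
      intro ε hε
      obtain ⟨δ1, hδ1, h1⟩ := hinlow hin ε hε
      obtain ⟨δ2, hδ2, h2⟩ := houthigh hout ε hε
      exact ⟨min δ1 δ2, lt_min hδ1 hδ2, fun z hz =>
        ⟨fun h => h1 z hz (lt_of_lt_of_le h (by simp [min_le_left])),
         fun h => h2 z hz (by
           have := min_le_right δ1 δ2
           linarith)⟩⟩
  · rcases houtor with hout | hout
    · right
      intro ε hε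
      obtain ⟨δ1, hδ1, h1⟩ := hinhigh hin ε hε
      obtain ⟨δ2, hδ2, h2⟩ := houtlow hout ε hε
      exact ⟨min δ1 δ2, lt_min hδ1 hδ2, fun z hz =>
        ⟨fun h => h1 z hz (lt_of_lt_of_le h (by simp [min_le_left])),
         fun h => h2 z hz (by
           have : R₁ - δ2 ≤ R₁ - min δ1 δ2 := by
             have := min_le_right δ1 δ2
             linarith
           linarith)⟩⟩
    · exact absurd ⟨hinhigh hin, houthigh hout⟩ hnothigh

lemma quant {f : ℂ → ℂ} {r₁ R₁ r₂ R₂ : ℝ} (hr₁ : 0 < r₁) (hR₁ : r₁ < R₁)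
    (hr₂ : 0 < r₂) (hR₂ : r₂ < R₂)
    (hf : DifferentiableOn ℂ f (annulus r₁ R₁))
    (hmapsf : Set.MapsTo f (annulus r₁ R₁) (annulus r₂ R₂))
    (hlow : ∀ ε > 0, ∃ δ > 0, ∀ z ∈ annulus r₁ R₁,
       (‖z‖ < r₁ + δ → ‖f z‖ ≤ r₂ + ε) ∧
       (R₁ - δ < ‖z‖ → R₂ - ε ≤ ‖f z‖)) :
    ∃ n : ℤ, Real.log R₂ - Real.log r₂ = (n : ℝ) * (Real.log R₁ - Real.log r₁) := by
  have hR₂0 : 0 < R₂ := lt_trans hr₂ hR₂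
  set M₁ : ℝ := Real.log R₁ - Real.log r₁ with hM₁def
  have hM₁ : 0 < M₁ := sub_pos.mpr (Real.log_lt_log hr₁ hR₁)
  set t : ℝ := (Real.log R₂ - Real.log r₂) / M₁ with htdef
  have harm : t * M₁ = Real.log R₂ - Real.log r₂ := div_mul_cancel₀ _ hM₁.ne'
  have hne : ∀ z ∈ annulus r₁ R₁, f z ≠ 0 := by
    intro z hz h0
    have := (hmapsf hz).1
    rw [h0, norm_zero] at this
    linarith
  -- upper bound
  have hbd1 : ∀ ε > 0, ∃ δ > 0, ∀ w ∈ annulus r₁ R₁,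
      (‖w‖ < r₁ + δ → ‖f w‖ ≤ r₂ + ε) ∧
      (R₁ - δ < ‖w‖ → ‖f w‖ ≤ R₂ + ε) := by
    intro ε hε
    obtain ⟨δ, hδpos, hδ⟩ := hlow ε hε
    exact ⟨δ, hδpos, fun w hw => ⟨(hδ w hw).1,
      fun _ => le_of_lt (lt_of_lt_of_le (hmapsf hw).2 (by linarith))⟩⟩
  have hup := core hr₁ hR₁ hr₂ hR₂0 hf hbd1
  -- lower bound via 1/f
  have hbd2 : ∀ ε > 0, ∃ δ > 0, ∀ w ∈ annulus r₁ R₁,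
      (‖w‖ < r₁ + δ → ‖(f w)⁻¹‖ ≤ r₂⁻¹ + ε) ∧
      (R₁ - δ < ‖w‖ → ‖(f w)⁻¹‖ ≤ R₂⁻¹ + ε) := by
    intro ε hε
    set ε' : ℝ := min (ε * R₂^2 / 2) (R₂ / 2) with hε'def
    have hε'pos : 0 < ε' := lt_min (by positivity) (by positivity)
    obtain ⟨δ, hδpos, hδ⟩ := hlow ε' hε'pos
    refine ⟨δ, hδpos, fun w hw => ⟨fun _ => ?_, fun hnear => ?_⟩⟩
    · rw [norm_inv]
      have h1 : r₂ < ‖f w‖ := (hmapsf hw).1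
      have : (‖f w‖)⁻¹ ≤ r₂⁻¹ := by
        apply inv_anti₀ hr₂ h1.le
      linarith
    · rw [norm_inv]
      have h1 : R₂ - ε' ≤ ‖f w‖ := (hδ w hw).2 hnear
      have h2 : 0 < R₂ - ε' := by
        have := min_le_right (ε * R₂^2 / 2) (R₂ / 2)
        have h3 : ε' ≤ R₂/2 := by rw [hε'def]; exact min_le_right _ _
        linarith
      have h3 : (‖f w‖)⁻¹ ≤ (R₂ - ε')⁻¹ := inv_anti₀ h2 h1
      have h4 : (R₂ - ε')⁻¹ ≤ R₂⁻¹ + ε := by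
        have hkey : 1 ≤ (R₂⁻¹ + ε) * (R₂ - ε') := by
          have hinv : R₂⁻¹ * R₂ = 1 := inv_mul_cancel₀ hR₂0.ne'
          have h5 : ε' ≤ ε * R₂^2 / 2 := by rw [hε'def]; exact min_le_left _ _
          have h6 : ε' ≤ R₂ / 2 := by rw [hε'def]; exact min_le_right _ _
          have h7 : R₂⁻¹ * ε' ≤ R₂⁻¹ * (ε * R₂^2/2) := by
            apply mul_le_mul_of_nonneg_left h5 (by positivity)
          have h8 : R₂⁻¹ * (ε * R₂^2/2) = ε * R₂ / 2 := by
            field_simp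
        
          nlinarith [mul_pos hε hε'pos]
        rw [inv_eq_one_div, div_le_iff₀ h2]
        linarith
      linarith
  have hdown := core hr₁ hR₁ (by positivity : (0:ℝ) < r₂⁻¹) (by positivity : (0:ℝ) < R₂⁻¹)
    (hf.inv hne) hbd2
  -- the exact modulus identity
  set C : ℝ := Real.log r₂ - t * Real.log r₁ with hCdef
  have heq : ∀ z ∈ annulus r₁ R₁,
      Real.log (‖f z‖) = t * Real.log (‖z‖) + C := by
    intro z hz
    have harm1 : Real.log R₂ + (-t) * Real.log R₁ = Real.log r₂ + (-t) * Real.log r₁ := by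
      have : t * M₁ = Real.log R₂ - Real.log r₂ := harm
      rw [hM₁def] at this
      linarith [this]
    have h1 := hup z hz (hne z hz) (-t)
    rw [harm1, max_self] at h1
    have harm2 : Real.log R₂⁻¹ + t * Real.log R₁ = Real.log r₂⁻¹ + t * Real.log r₁ := by
      rw [Real.log_inv, Real.log_inv]
      linarith [harm1]
    have h2 := hdown z hz (inv_ne_zero (hne z hz)) t
    rw [harm2, max_self] at h2
    rw [Pi.inv_apply, norm_inv, Real.log_inv, Real.log_inv] at h2
    rw [hCdef]
    linarith
  have habs : ∀ z ∈ annulus r₁ R₁,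
      ‖f z‖ = Real.exp C * ‖z‖ ^ t := by
    intro z hz
    have hz0 : (0:ℝ) < ‖z‖ := lt_trans hr₁ hz.1
    have hfz0 : (0:ℝ) < ‖f z‖ := by
      have := (hmapsf hz).1; linarith
    rw [← Real.exp_log hfz0, heq z hz, Real.exp_add,
      Real.rpow_def_of_pos hz0, mul_comm (Real.log (‖z‖)) t, mul_comm]
  have hderiv := deriv_eq hr₁ (Real.exp_pos C) hf habs
  obtain ⟨n, hn⟩ := exists_int_of_deriv hr₁ hR₁ hf hne hderiv
  exact ⟨n, by rw [← harm, hn, hM₁def]⟩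

lemma sync {f g : ℂ → ℂ} {r₁ R₁ r₂ R₂ : ℝ} (hr₁ : 0 < r₁) (hR₁ : r₁ < R₁)
    (hr₂ : 0 < r₂) (hR₂ : r₂ < R₂)
    (hmapsf : Set.MapsTo f (annulus r₁ R₁) (annulus r₂ R₂))
    (hgf : ∀ z ∈ annulus r₁ R₁, g (f z) = z)
    (hlow : ∀ ε > 0, ∃ δ > 0, ∀ z ∈ annulus r₁ R₁,
       (‖z‖ < r₁ + δ → ‖f z‖ ≤ r₂ + ε) ∧
       (R₁ - δ < ‖z‖ → R₂ - ε ≤ ‖f z‖))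
    (hdichog : (∀ ε > 0, ∃ δ > 0, ∀ w ∈ annulus r₂ R₂,
       (‖w‖ < r₂ + δ → ‖g w‖ ≤ r₁ + ε) ∧
       (R₂ - δ < ‖w‖ → R₁ - ε ≤ ‖g w‖)) ∨
      (∀ ε > 0, ∃ δ > 0, ∀ w ∈ annulus r₂ R₂,
       (‖w‖ < r₂ + δ → R₁ - ε ≤ ‖g w‖) ∧
       (R₂ - δ < ‖w‖ → ‖g w‖ ≤ r₁ + ε))) :
    ∀ ε > 0, ∃ δ > 0, ∀ w ∈ annulus r₂ R₂,
       (‖w‖ < r₂ + δ → ‖g w‖ ≤ r₁ + ε) ∧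
       (R₂ - δ < ‖w‖ → R₁ - ε ≤ ‖g w‖) := by
  rcases hdichog with h | h
  · exact h
  · exfalso
    -- g would map the inner boundary to the outer boundary, contradicting g ∘ f = id
    set ε₀ : ℝ := (R₁ - r₁) / 4 with hε₀
    have hε₀pos : 0 < ε₀ := by rw [hε₀]; linarith
    obtain ⟨δg, hδgpos, hδg⟩ := h ε₀ hε₀pos
    obtain ⟨δf, hδfpos, hδf⟩ := hlow (δg / 2) (by linarith)
    set x : ℝ := r₁ + min (min δf ε₀) ((R₁ - r₁)/2) / 2 with hx
    have hminpos : 0 < min (min δf ε₀) ((R₁ - r₁)/2) :=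
      lt_min (lt_min hδfpos hε₀pos) (by linarith)
    have hx1 : r₁ < x := by rw [hx]; linarith
    have hx2 : x < R₁ := by
      rw [hx]
      have := min_le_right (min δf ε₀) ((R₁ - r₁)/2)
      linarith
    have hxmem : ((x:ℝ):ℂ) ∈ annulus r₁ R₁ := by
      constructor <;> rw [Complex.norm_real, Real.norm_eq_abs, abs_of_pos (by linarith : (0:ℝ) < x)]
      · exact hx1
      · exact hx2
    have habsx : ‖((x:ℝ):ℂ)‖ = x := by
      rw [Complex.norm_real, Real.norm_eq_abs, abs_of_pos (by linarith : (0:ℝ) < x)]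
    have hfx : ‖f ((x:ℝ):ℂ)‖ ≤ r₂ + δg/2 := by
      refine (hδf _ hxmem).1 ?_
      rw [habsx, hx]
      have h1 := min_le_left (min δf ε₀) ((R₁ - r₁)/2)
      have h2 := min_le_left δf ε₀
      linarith
    have hgfx := (hδg (f ((x:ℝ):ℂ)) (hmapsf hxmem)).1 (by linarith)
    rw [hgf _ hxmem, habsx] at hgfx
    have h1 := min_le_left (min δf ε₀) ((R₁ - r₁)/2)
    have h2 := min_le_right δf ε₀
    rw [hx] at hgfx
    rw [hε₀] at hgfx h2
    linarith

lemma ratio_of_innerlow {f g : ℂ → ℂ} {r₁ R₁ r₂ R₂ : ℝ} (hr₁ : 0 < r₁) (hR₁ : r₁ < R₁)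
    (hr₂ : 0 < r₂) (hR₂ : r₂ < R₂)
    (hf : DifferentiableOn ℂ f (annulus r₁ R₁))
    (hg : DifferentiableOn ℂ g (annulus r₂ R₂))
    (hmapsf : Set.MapsTo f (annulus r₁ R₁) (annulus r₂ R₂))
    (hmapsg : Set.MapsTo g (annulus r₂ R₂) (annulus r₁ R₁))
    (hlowf : ∀ ε > 0, ∃ δ > 0, ∀ z ∈ annulus r₁ R₁,
       (‖z‖ < r₁ + δ → ‖f z‖ ≤ r₂ + ε) ∧
       (R₁ - δ < ‖z‖ → R₂ - ε ≤ ‖f z‖))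
    (hlowg : ∀ ε > 0, ∃ δ > 0, ∀ w ∈ annulus r₂ R₂,
       (‖w‖ < r₂ + δ → ‖g w‖ ≤ r₁ + ε) ∧
       (R₂ - δ < ‖w‖ → R₁ - ε ≤ ‖g w‖)) :
    R₁ / r₁ = R₂ / r₂ := by
  obtain ⟨n, hn⟩ := quant hr₁ hR₁ hr₂ hR₂ hf hmapsf hlowf
  obtain ⟨m, hm⟩ := quant hr₂ hR₂ hr₁ hR₁ hg hmapsg hlowg
  have hM₁ : 0 < Real.log R₁ - Real.log r₁ := sub_pos.mpr (Real.log_lt_log hr₁ hR₁)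
  have hM₂ : 0 < Real.log R₂ - Real.log r₂ := sub_pos.mpr (Real.log_lt_log hr₂ hR₂)
  have hnpos : (0:ℝ) < (n:ℝ) := by
    by_contra hcon
    push_neg at hcon
    nlinarith
  have hn1 : (1:ℝ) ≤ (n:ℝ) := by
    have : (0:ℤ) < n := by exact_mod_cast hnpos
    exact_mod_cast this
  have hmpos : (0:ℝ) < (m:ℝ) := by
    by_contra hcon
    push_neg at hcon
    nlinarith
  have hm1 : (1:ℝ) ≤ (m:ℝ) := by
    have : (0:ℤ) < m := by exact_mod_cast hmpos
    exact_mod_cast this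
  have hMeq : Real.log R₁ - Real.log r₁ = Real.log R₂ - Real.log r₂ := by nlinarith
  have hR₁0 : (0:ℝ) < R₁ := by linarith
  have hR₂0 : (0:ℝ) < R₂ := by linarith
  have h1 : Real.log (R₁ / r₁) = Real.log (R₂ / r₂) := by
    rw [Real.log_div hR₁0.ne' hr₁.ne', Real.log_div hR₂0.ne' hr₂.ne']
    linarith
  have h2 : R₁ / r₁ = Real.exp (Real.log (R₁ / r₁)) :=
    (Real.exp_log (div_pos hR₁0 hr₁)).symm
  rw [h2, h1, Real.exp_log (div_pos hR₂0 hr₂)]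

theorem annuli_conformally_equivalent_iff' (r₁ R₁ r₂ R₂ : ℝ)
    (hr₁ : 0 < r₁) (hR₁ : r₁ < R₁) (hr₂ : 0 < r₂) (hR₂ : r₂ < R₂) :
    (∃ f g : ℂ → ℂ,
      DifferentiableOn ℂ f (annulus r₁ R₁) ∧ DifferentiableOn ℂ g (annulus r₂ R₂) ∧
      Set.MapsTo f (annulus r₁ R₁) (annulus r₂ R₂) ∧
      Set.MapsTo g (annulus r₂ R₂) (annulus r₁ R₁) ∧
      (∀ z ∈ annulus r₁ R₁, g (f z) = z) ∧
      (∀ z ∈ annulus r₂ R₂, f (g z) = z)) ↔ R₁ / r₁ = R₂ / r₂ := by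
  constructor
  · rintro ⟨f, g, hf, hg, hmf, hmg, hgf, hfg⟩
    rcases dichotomy hr₁ hR₁ hr₂ hR₂ hf hg hmf hmg hgf with hlowf | hhighf
    · have hlowg := sync hr₁ hR₁ hr₂ hR₂ hmf hgf hlowf
        (dichotomy hr₂ hR₂ hr₁ hR₁ hg hf hmg hmf hfg)
      exact ratio_of_innerlow hr₁ hR₁ hr₂ hR₂ hf hg hmf hmg hlowf hlowg
    · -- flip the orientation
      set c₂ : ℝ := r₂ * R₂ with hc₂def
      have hc₂ : (0:ℝ) < c₂ := by rw [hc₂def]; exact mul_pos hr₂ (by linarith)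
      have hc₂C : ((c₂:ℝ):ℂ) ≠ 0 := Complex.ofReal_ne_zero.mpr hc₂.ne'
      have hneD : ∀ w ∈ annulus r₂ R₂, w ≠ 0 := by
        intro w hw h0
        subst h0
        simp only [annulus, mem_setOf_eq, norm_zero] at hw
        linarith [hw.1]
      have hne : ∀ z ∈ annulus r₁ R₁, f z ≠ 0 := fun z hz => hneD _ (hmf hz)
      have habsinv : ∀ w : ℂ, ‖((c₂:ℝ):ℂ)/w‖ = c₂ / ‖w‖ := by
        intro w
        rw [norm_div, Complex.norm_real, Real.norm_eq_abs, abs_of_pos hc₂]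
      have hinvmem : ∀ w ∈ annulus r₂ R₂, ((c₂:ℝ):ℂ)/w ∈ annulus r₂ R₂ := by
        intro w hw
        have hw0 : (0:ℝ) < ‖w‖ := by linarith [hw.1]
        constructor
        · rw [habsinv, lt_div_iff₀ hw0]
          nlinarith [hw.2, hr₂, hc₂def.le, hc₂def.ge]
        · rw [habsinv, div_lt_iff₀ hw0]
          nlinarith [hw.1, hr₂, hR₂, hc₂def.le, hc₂def.ge]
      have hkey : ∀ x : ℂ, x ≠ 0 → ((c₂:ℝ):ℂ)/(((c₂:ℝ):ℂ)/x) = x := by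
        intro x hx
        field_simp
      set F : ℂ → ℂ := fun z => ((c₂:ℝ):ℂ) / f z with hFdef
      set G : ℂ → ℂ := fun w => g (((c₂:ℝ):ℂ) / w) with hGdef
      have hFdiff : DifferentiableOn ℂ F (annulus r₁ R₁) :=
        (differentiableOn_const _).div hf hne
      have hinvdiff : DifferentiableOn ℂ (fun w : ℂ => ((c₂:ℝ):ℂ)/w) (annulus r₂ R₂) :=
        (differentiableOn_const _).div differentiableOn_id hneD
      have hGdiff : DifferentiableOn ℂ G (annulus r₂ R₂) :=
        hg.comp hinvdiff hinvmem
      have hmF : Set.MapsTo F (annulus r₁ R₁) (annulus r₂ R₂) := by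
        intro z hz
        exact hinvmem _ (hmf hz)
      have hmG : Set.MapsTo G (annulus r₂ R₂) (annulus r₁ R₁) := by
        intro w hw
        exact hmg (hinvmem _ hw)
      have hGF : ∀ z ∈ annulus r₁ R₁, G (F z) = z := by
        intro z hz
        show g (((c₂:ℝ):ℂ)/(((c₂:ℝ):ℂ)/f z)) = z
        rw [hkey _ (hne z hz)]
        exact hgf z hz
      have hFG : ∀ w ∈ annulus r₂ R₂, F (G w) = w := by
        intro w hw
        show ((c₂:ℝ):ℂ) / f (g (((c₂:ℝ):ℂ)/w)) = w
        rw [hfg _ (hinvmem _ hw)]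
        exact hkey _ (hneD _ hw)
      have hlowF : ∀ ε > 0, ∃ δ > 0, ∀ z ∈ annulus r₁ R₁,
          (‖z‖ < r₁ + δ → ‖F z‖ ≤ r₂ + ε) ∧
          (R₁ - δ < ‖z‖ → R₂ - ε ≤ ‖F z‖) := by
        intro ε hε
        set ε' : ℝ := min (min (ε * R₂ / (2 * r₂)) (R₂ / 2)) (ε * r₂ / R₂) with hε'def
        have hR₂0 : (0:ℝ) < R₂ := by linarith
        have hε'pos : 0 < ε' := lt_min (lt_min (by positivity) (by positivity)) (by positivity)
        have he1 : ε' ≤ ε * R₂ / (2 * r₂) := le_trans (min_le_left _ _) (min_le_left _ _)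
        have he2 : ε' ≤ R₂ / 2 := le_trans (min_le_left _ _) (min_le_right _ _)
        have he3 : ε' ≤ ε * r₂ / R₂ := min_le_right _ _
        obtain ⟨δ, hδpos, hδ⟩ := hhighf ε' hε'pos
        refine ⟨δ, hδpos, fun z hz => ⟨fun hnear => ?_, fun hnear => ?_⟩⟩
        · have h1 : R₂ - ε' ≤ ‖f z‖ := (hδ z hz).1 hnear
          have h2 : (0:ℝ) < R₂ - ε' := by linarith
          have habsF : ‖F z‖ = c₂ / ‖f z‖ := habsinv (f z)
          rw [habsF]
          have h3 : c₂ / ‖f z‖ ≤ c₂ / (R₂ - ε') := by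
            gcongr
          refine le_trans h3 ?_
          rw [div_le_iff₀ h2]
          have e1 : r₂ * ε' ≤ ε * R₂ / 2 := by
            have h4 : r₂ * ε' ≤ r₂ * (ε * R₂ / (2 * r₂)) :=
              mul_le_mul_of_nonneg_left he1 hr₂.le
            have h5 : r₂ * (ε * R₂ / (2 * r₂)) = ε * R₂ / 2 := by
              field_simp
            linarith
          have e2 : ε * ε' ≤ ε * (R₂ / 2) := mul_le_mul_of_nonneg_left he2 hε.le
          rw [hc₂def]
          nlinarith
        · have h1 : ‖f z‖ ≤ r₂ + ε' := (hδ z hz).2 hnear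
          have hfz0 : (0:ℝ) < ‖f z‖ := by
            have := (hmf hz).1; linarith
          have habsF : ‖F z‖ = c₂ / ‖f z‖ := habsinv (f z)
          rw [habsF]
          have h3 : c₂ / (r₂ + ε') ≤ c₂ / ‖f z‖ := by
            gcongr
          refine le_trans ?_ h3
          rw [le_div_iff₀ (by linarith : (0:ℝ) < r₂ + ε')]
          have e3 : R₂ * ε' ≤ ε * r₂ := by
            have h4 : R₂ * ε' ≤ R₂ * (ε * r₂ / R₂) := mul_le_mul_of_nonneg_left he3 hR₂0.le
            have h5 : R₂ * (ε * r₂ / R₂) = ε * r₂ := by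
              field_simp
            linarith
          have e4 : 0 ≤ ε * ε' := by positivity
          rw [hc₂def]
          nlinarith
      have hlowG := sync hr₁ hR₁ hr₂ hR₂ hmF hGF hlowF
        (dichotomy hr₂ hR₂ hr₁ hR₁ hGdiff hFdiff hmG hmF hFG)
      exact ratio_of_innerlow hr₁ hR₁ hr₂ hR₂ hFdiff hGdiff hmF hmG hlowF hlowG
  · -- easy direction: scaling
    intro h
    have hratio : r₂ * R₁ = r₁ * R₂ := by
      field_simp at h
      linarith
    refine ⟨fun z => ((r₂/r₁ : ℝ):ℂ) * z, fun w => ((r₁/r₂ : ℝ):ℂ) * w, ?_, ?_, ?_, ?_, ?_, ?_⟩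
    · exact (differentiableOn_const _).mul differentiableOn_id
    · exact (differentiableOn_const _).mul differentiableOn_id
    · intro z hz
      have habs : ‖((r₂/r₁ : ℝ):ℂ) * z‖ = (r₂/r₁) * ‖z‖ := by
        rw [norm_mul, Complex.norm_real, Real.norm_eq_abs, abs_of_pos (by positivity)]
      constructor
      · rw [habs]
        calc r₂ = (r₂/r₁) * r₁ := by field_simp
          _ < (r₂/r₁) * ‖z‖ := by
            exact mul_lt_mul_of_pos_left hz.1 (by positivity)
      · rw [habs]
        calc (r₂/r₁) * ‖z‖ < (r₂/r₁) * R₁ := by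
              exact mul_lt_mul_of_pos_left hz.2 (by positivity)
          _ = R₂ := by
            rw [div_mul_eq_mul_div, mul_comm]
            rw [div_eq_iff hr₁.ne']
            linarith
    · intro w hw
      have habs : ‖((r₁/r₂ : ℝ):ℂ) * w‖ = (r₁/r₂) * ‖w‖ := by
        rw [norm_mul, Complex.norm_real, Real.norm_eq_abs, abs_of_pos (by positivity)]
      constructor
      · rw [habs]
        calc r₁ = (r₁/r₂) * r₂ := by field_simp
          _ < (r₁/r₂) * ‖w‖ := by
            exact mul_lt_mul_of_pos_left hw.1 (by positivity)
      · rw [habs]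
        calc (r₁/r₂) * ‖w‖ < (r₁/r₂) * R₂ := by
              exact mul_lt_mul_of_pos_left hw.2 (by positivity)
          _ = R₁ := by
            rw [div_mul_eq_mul_div, mul_comm]
            rw [div_eq_iff hr₂.ne']
            linarith
    · intro z _
      show ((r₁/r₂ : ℝ):ℂ) * (((r₂/r₁ : ℝ):ℂ) * z) = z
      have : ((r₁/r₂ : ℝ):ℂ) * (((r₂/r₁ : ℝ):ℂ) * z) = (((r₁/r₂) * (r₂/r₁) : ℝ):ℂ) * z := by
        push_cast
        ring
      rw [this]
      have h1 : (r₁/r₂) * (r₂/r₁) = 1 := by field_simp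
      rw [h1]
      simp
    · intro w _
      show ((r₂/r₁ : ℝ):ℂ) * (((r₁/r₂ : ℝ):ℂ) * w) = w
      have : ((r₂/r₁ : ℝ):ℂ) * (((r₁/r₂ : ℝ):ℂ) * w) = (((r₂/r₁) * (r₁/r₂) : ℝ):ℂ) * w := by
        push_cast
        ring
      rw [this]
      have h1 : (r₂/r₁) * (r₁/r₂) = 1 := by field_simp
      rw [h1]
      simp
end AnnulusProof

/-- Two round annuli of finite conformal module are conformally equivalent
(there is a biholomorphic map between them) iff `R₁/r₁ = R₂/r₂`. -/
theorem annuli_conformally_equivalent_iff (r₁ R₁ r₂ R₂ : ℝ)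
    (hr₁ : 0 < r₁) (hR₁ : r₁ < R₁) (hr₂ : 0 < r₂) (hR₂ : r₂ < R₂) :
    (∃ f g : ℂ → ℂ,
      DifferentiableOn ℂ f (annulus r₁ R₁) ∧ DifferentiableOn ℂ g (annulus r₂ R₂) ∧
      Set.MapsTo f (annulus r₁ R₁) (annulus r₂ R₂) ∧
      Set.MapsTo g (annulus r₂ R₂) (annulus r₁ R₁) ∧
      (∀ z ∈ annulus r₁ R₁, g (f z) = z) ∧
      (∀ z ∈ annulus r₂ R₂, f (g z) = z)) ↔ R₁ / r₁ = R₂ / r₂ :=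
  AnnulusProof.annuli_conformally_equivalent_iff' r₁ R₁ r₂ R₂ hr₁ hR₁ hr₂ hR₂
end

section
/- The conformal module of an annulus is invariant under biholomorphism: if f : A(r1,R1) → A(r2,R2) is a biholomorphic map between round annuli with 0 < r1 < R1 < ∞ and 0 < r2 < R2 < ∞, then (1/(2π)) log(R1/r1) = (1/(2π)) log(R2/r2). -/
open Real

open Set Complex Filter Topology

lemma annulus_isOpen (r R : ℝ) : IsOpen (annulus r R) := by
  have : annulus r R = ((fun z : ℂ => ‖z‖) ⁻¹' Ioo r R) := by ext z; simp [annulus, Set.mem_Ioo]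
  rw [this]; exact isOpen_Ioo.preimage continuous_norm

lemma exp_mem_annulus {r R : ℝ} (hr : 0 < r) (hR : 0 < R) (w : ℂ) :
    Complex.exp w ∈ annulus r R ↔ Real.log r < w.re ∧ w.re < Real.log R := by
  simp only [annulus, Set.mem_setOf_eq, Complex.norm_exp]
  constructor
  · rintro ⟨h1, h2⟩; exact ⟨(Real.log_lt_iff_lt_exp hr).2 h1, (Real.lt_log_iff_exp_lt hR).2 h2⟩
  · rintro ⟨h1, h2⟩; exact ⟨(Real.log_lt_iff_lt_exp hr).1 h1, (Real.lt_log_iff_exp_lt hR).1 h2⟩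

lemma annulus_eq_image {r R : ℝ} (hr : 0 < r) (hR : 0 < R) :
    annulus r R = Complex.exp '' (Complex.HadamardThreeLines.verticalStrip (Real.log r) (Real.log R)) := by
  ext z
  constructor
  · intro hz
    have hz0 : z ≠ 0 := by
      intro h; rw [h] at hz; simp [annulus] at hz; linarith [hz.1]
    refine ⟨Complex.log z, ?_, Complex.exp_log hz0⟩
    exact (exp_mem_annulus hr hR (Complex.log z)).1 (by rwa [Complex.exp_log hz0])
  · rintro ⟨w, hw, rfl⟩
    exact (exp_mem_annulus hr hR w).2 hw

lemma strip_convex (a b : ℝ) : Convex ℝ (Complex.HadamardThreeLines.verticalStrip a b) :=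
  (convex_Ioo a b).linear_preimage Complex.reLm

lemma annulus_isConnected {r R : ℝ} (hr : 0 < r) (hR : r < R) : IsConnected (annulus r R) := by
  rw [annulus_eq_image hr (hr.trans hR)]
  apply IsConnected.image _ _ Complex.continuous_exp.continuousOn
  refine ⟨⟨((Real.log r + Real.log R)/2 : ℝ), ?_⟩, (strip_convex _ _).isPreconnected⟩
  have := Real.log_lt_log hr hR
  constructor <;> simp <;> linarith

open Complex.HadamardThreeLines in
lemma norm_le_on_annulus {f : ℂ → ℂ} {r R s t C : ℝ} (hs : r < s) (hst : s < t) (htR : t < R)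
    (hf : DifferentiableOn ℂ f (annulus r R))
    (hC : ∀ z : ℂ, ‖z‖ = s ∨ ‖z‖ = t → ‖f z‖ ≤ C) :
    ∀ z ∈ annulus s t, ‖f z‖ ≤ C := by
  intro z hz
  have hbd : Bornology.IsBounded (annulus s t) := by
    apply (Metric.isBounded_ball (x := (0:ℂ)) (r := t)).subset
    intro w hw
    simpa [Metric.mem_ball, Complex.dist_eq] using hw.2
  have hclos : closure (annulus s t) ⊆ (fun z : ℂ => ‖z‖) ⁻¹' Icc s t := by
    apply closure_minimal
    · intro w hw; exact ⟨hw.1.le, hw.2.le⟩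
    · exact (isClosed_Icc).preimage continuous_norm
  have hsub : (fun z : ℂ => ‖z‖) ⁻¹' Icc s t ⊆ annulus r R := by
    intro w hw; exact ⟨lt_of_lt_of_le hs hw.1, lt_of_le_of_lt hw.2 htR⟩
  have hdcc : DiffContOnCl ℂ f (annulus s t) := by
    refine ⟨hf.mono ?_, hf.continuousOn.mono (hclos.trans hsub)⟩
    intro w hw; exact hsub ⟨hw.1.le, hw.2.le⟩
  refine Complex.norm_le_of_forall_mem_frontier_norm_le hbd hdcc ?_ (subset_closure hz)
  intro w hw
  rw [(annulus_isOpen s t).frontier_eq] at hw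
  have h1 := hclos hw.1
  have h2 : ¬ (s < ‖w‖ ∧ ‖w‖ < t) := hw.2
  apply hC
  rcases lt_or_eq_of_le h1.1 with h | h
  · rcases lt_or_eq_of_le h1.2 with h' | h'
    · exact absurd ⟨h, h'⟩ h2
    · right; exact h'
  · left; exact h.symm

open Complex.HadamardThreeLines

lemma re_affine (s t : ℝ) (ζ : ℂ) : ((s:ℂ) + ((t:ℂ) - s) * ζ).re = s + (t - s) * ζ.re := by
  simp [Complex.add_re, Complex.mul_re, Complex.sub_re, Complex.ofReal_re, Complex.ofReal_im]

lemma threeLines_general {F : ℂ → ℂ} {s t a b : ℝ} (hst : s < t) (ha : 0 < a) (hb : 0 < b)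
    (hd : DiffContOnCl ℂ F (verticalStrip s t))
    (hB : BddAbove ((norm ∘ F) '' (verticalClosedStrip s t)))
    (hA : ∀ w : ℂ, w.re = s → ‖F w‖ ≤ a) (hBt : ∀ w : ℂ, w.re = t → ‖F w‖ ≤ b)
    {w : ℂ} (hw : w.re ∈ Icc s t) :
    ‖F w‖ ≤ a ^ ((t - w.re)/(t - s)) * b ^ ((w.re - s)/(t - s)) := by
  have hts : (0:ℝ) < t - s := by linarith
  have htsne : ((t:ℂ) - s) ≠ 0 := by
    simpa using sub_ne_zero.2 (by exact_mod_cast hst.ne' : (t:ℂ) ≠ s)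
  set φ : ℂ → ℂ := fun ζ => (s:ℂ) + ((t:ℂ) - s) * ζ with hφ
  have hφdiff : Differentiable ℂ φ := by
    apply Differentiable.add (differentiable_const _)
    exact (differentiable_const _).mul differentiable_id
  have hφmaps : ∀ ζ : ℂ, ζ.re ∈ Ioo (0:ℝ) 1 → (φ ζ).re ∈ Ioo s t := by
    intro ζ hζ
    rw [re_affine]
    constructor <;> nlinarith [hζ.1, hζ.2]
  have hφmaps' : ∀ ζ : ℂ, ζ.re ∈ Icc (0:ℝ) 1 → (φ ζ).re ∈ Icc s t := by
    intro ζ hζ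
    rw [re_affine]
    constructor <;> nlinarith [hζ.1, hζ.2]
  have hclos : closure (verticalStrip s t) = verticalClosedStrip s t := by
    rw [verticalStrip, verticalClosedStrip, ← closure_Ioo hst.ne, closure_preimage_re]
  set G : ℂ → ℂ := F ∘ φ with hG
  have hdG : DiffContOnCl ℂ G (verticalStrip 0 1) := by
    constructor
    · apply DifferentiableOn.comp hd.1 (hφdiff.differentiableOn)
      intro ζ hζ; exact hφmaps ζ hζ
    · have h2 : ContinuousOn F (verticalClosedStrip s t) := by rw [← hclos]; exact hd.2
      apply h2.comp hφdiff.continuous.continuousOn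
      intro ζ hζ
      have hclos01 : closure (verticalStrip (0:ℝ) 1) = verticalClosedStrip 0 1 := by
        rw [verticalStrip, verticalClosedStrip, ← closure_Ioo (zero_ne_one), closure_preimage_re]
      rw [hclos01] at hζ
      exact hφmaps' ζ hζ
  have hBG : BddAbove ((norm ∘ G) '' (verticalClosedStrip 0 1)) := by
    apply hB.mono
    rintro x ⟨ζ, hζ, rfl⟩
    exact ⟨φ ζ, hφmaps' ζ hζ, rfl⟩
  set ζ₀ : ℂ := (((t - s)⁻¹ : ℝ) : ℂ) * (w - s) with hζ₀
  have hre : ζ₀.re = (w.re - s)/(t - s) := by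
    rw [hζ₀, Complex.re_ofReal_mul, Complex.sub_re, Complex.ofReal_re]
    rw [div_eq_inv_mul]
  have hζ₀mem : ζ₀ ∈ verticalClosedStrip 0 1 := by
    simp only [verticalClosedStrip, Set.mem_preimage, hre, Set.mem_Icc]
    constructor
    · exact div_nonneg (by linarith [hw.1]) hts.le
    · rw [div_le_one hts]; linarith [hw.2]
  have hφζ₀ : φ ζ₀ = w := by
    rw [hφ, hζ₀]
    push_cast
    field_simp
    ring
  have := norm_le_interp_of_mem_verticalClosedStrip' (f := G) zero_lt_one hζ₀mem hdG hBG
    (fun ζ hζ => hA (φ ζ) (by rw [re_affine]; simp at hζ; rw [hζ]; ring))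
    (fun ζ hζ => hBt (φ ζ) (by rw [re_affine]; simp at hζ; rw [hζ]; ring))
  rw [hG] at this
  simp only [Function.comp_apply, hφζ₀] at this
  convert this using 2
  · rw [hre]; congr 1; field_simp; ring
  · rw [hre]; simp

lemma closure_strip {s t : ℝ} (hst : s < t) :
    closure (verticalStrip s t) = verticalClosedStrip s t := by
  rw [verticalStrip, verticalClosedStrip, ← closure_Ioo hst.ne, closure_preimage_re]

lemma annulus_three_lines {r₁ R₁ : ℝ} (hr₁ : 0 < r₁) (hR₁ : r₁ < R₁) {F : ℂ → ℂ}
    (hF : DifferentiableOn ℂ F (annulus r₁ R₁)) {M : ℝ}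
    (hM : ∀ z ∈ annulus r₁ R₁, ‖F z‖ ≤ M)
    {s t : ℝ} (hs : Real.log r₁ < s) (hst : s < t) (ht : t < Real.log R₁)
    {a b : ℝ} (ha : 0 < a) (hb : 0 < b)
    (hac : ∀ z ∈ annulus r₁ R₁, ‖z‖ = Real.exp s → ‖F z‖ ≤ a)
    (hbc : ∀ z ∈ annulus r₁ R₁, ‖z‖ = Real.exp t → ‖F z‖ ≤ b)
    {w : ℂ} (hws : s ≤ w.re) (hwt : w.re ≤ t) :
    ‖F (Complex.exp w)‖ ≤ a ^ ((t - w.re)/(t - s)) * b ^ ((w.re - s)/(t - s)) := by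
  have hR₁0 : 0 < R₁ := hr₁.trans hR₁
  have hmem : ∀ ζ : ℂ, ζ.re ∈ Icc s t → Complex.exp ζ ∈ annulus r₁ R₁ := by
    intro ζ hζ
    exact (exp_mem_annulus hr₁ hR₁0 ζ).2 ⟨lt_of_lt_of_le hs hζ.1, lt_of_le_of_lt hζ.2 ht⟩
  have hd : DiffContOnCl ℂ (F ∘ Complex.exp) (verticalStrip s t) := by
    constructor
    · apply DifferentiableOn.comp hF Complex.differentiable_exp.differentiableOn
      intro ζ hζ
      exact hmem ζ ⟨hζ.1.le, hζ.2.le⟩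
    · rw [closure_strip hst]
      apply hF.continuousOn.comp Complex.continuous_exp.continuousOn
      intro ζ hζ
      exact hmem ζ hζ
  have hB : BddAbove ((norm ∘ (F ∘ Complex.exp)) '' (verticalClosedStrip s t)) := by
    refine ⟨M, ?_⟩
    rintro y ⟨ζ, hζ, rfl⟩
    simpa using hM _ (hmem ζ hζ)
  refine (threeLines_general hst ha hb hd hB ?_ ?_ ⟨hws, hwt⟩).trans_eq rfl
  · intro ζ hζ
    have h1 : Complex.exp ζ ∈ annulus r₁ R₁ := hmem ζ (by rw [hζ]; exact ⟨le_refl _, hst.le⟩)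
    simpa using hac _ h1 (by rw [Complex.norm_exp, hζ])
  · intro ζ hζ
    have h1 : Complex.exp ζ ∈ annulus r₁ R₁ := hmem ζ (by rw [hζ]; exact ⟨hst.le, le_refl _⟩)
    simpa using hbc _ h1 (by rw [Complex.norm_exp, hζ])

open Filter Topology in
lemma key {r₁ R₁ r₂ R₂ : ℝ} (hr₁ : 0 < r₁) (hR₁ : r₁ < R₁) (hr₂ : 0 < r₂) (hR₂ : r₂ < R₂)
    {f : ℂ → ℂ}
    (hf : DifferentiableOn ℂ f (annulus r₁ R₁))
    (hmaps : Set.MapsTo f (annulus r₁ R₁) (annulus r₂ R₂))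
    (hor : ∀ δ : ℝ, 0 < δ → ∃ ε : ℝ, 0 < ε ∧ ε < (R₁ - r₁)/2 ∧
      ∀ z ∈ annulus r₁ R₁, (‖z‖ < r₁ + ε → ‖f z‖ < r₂ + δ) ∧
        (R₁ - ε < ‖z‖ → R₂ - δ < ‖f z‖)) :
    Real.log R₁ - Real.log r₁ ≤ Real.log R₂ - Real.log r₂ := by
  have hR₁0 : 0 < R₁ := hr₁.trans hR₁
  have hR₂0 : 0 < R₂ := hr₂.trans hR₂
  set l₁ := Real.log r₁ with hl₁def
  set L₁ := Real.log R₁ with hL₁def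
  have hlL : l₁ < L₁ := Real.log_lt_log hr₁ hR₁
  have hLpos : 0 < L₁ - l₁ := by linarith
  have hl2L2 : Real.log r₂ < Real.log R₂ := Real.log_lt_log hr₂ hR₂
  set α := (Real.log R₂ - Real.log r₂) / (L₁ - l₁) with hαdef
  have hαpos : 0 < α := div_pos (by linarith) hLpos
  have hfne : ∀ z ∈ annulus r₁ R₁, f z ≠ 0 := by
    intro z hz h0
    have h1 := (hmaps hz).1
    rw [h0] at h1; simp at h1; linarith
  -- sequences of δ and ε
  set δs : ℕ → ℝ := fun n => R₂/2 * (1/(n+1)) with hδdef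
  have hrecpos : ∀ n : ℕ, (0:ℝ) < 1/((n:ℝ)+1) := fun n => by positivity
  have hδpos : ∀ n : ℕ, 0 < δs n := fun n => by
    have := hrecpos n; rw [hδdef]; positivity
  have hδle : ∀ n : ℕ, δs n ≤ R₂/2 := by
    intro n
    rw [hδdef]
    have h1 : 1/((n:ℝ)+1) ≤ 1 := by
      rw [div_le_one (by positivity)]; simp
    nlinarith
  choose ε hε0 hεlt hεP using fun n => hor (δs n) (hδpos n)
  have hrecip : Tendsto (fun n : ℕ => 1/((n:ℝ)+1)) atTop (𝓝 0) :=
    tendsto_one_div_add_atTop_nhds_zero_nat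
  have hδ0 : Tendsto δs atTop (𝓝 0) := by
    have := hrecip.const_mul (R₂/2)
    simpa [hδdef] using this
  -- conversion of the limit bound to exponential form
  have hconv : ∀ y : ℝ, r₂ ^ ((L₁ - y)/(L₁ - l₁)) * R₂ ^ ((y - l₁)/(L₁ - l₁))
      = Real.exp (Real.log r₂ + α * (y - l₁)) := by
    intro y
    rw [Real.rpow_def_of_pos hr₂, Real.rpow_def_of_pos hR₂0, ← Real.exp_add]
    congr 1
    rw [hαdef]
    field_simp
    ring
  -- the modulus formula
  have hmod : ∀ w : ℂ, w.re ∈ Set.Ioo l₁ L₁ →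
      ‖f (Complex.exp w)‖ = Real.exp (Real.log r₂ + α * (w.re - l₁)) := by
    intro w hw
    obtain ⟨hx1, hx2⟩ := hw
    have hwmem : Complex.exp w ∈ annulus r₁ R₁ := (exp_mem_annulus hr₁ hR₁0 w).2 ⟨hx1, hx2⟩
    have hfw0 : r₂ < ‖f (Complex.exp w)‖ := (hmaps hwmem).1
    rw [← hconv w.re]
    -- upper bound
    have hub : ‖f (Complex.exp w)‖ ≤
        r₂ ^ ((L₁ - w.re)/(L₁ - l₁)) * R₂ ^ ((w.re - l₁)/(L₁ - l₁)) := by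
      set s : ℕ → ℝ := fun n =>
        l₁ + min (min ((w.re - l₁)/2) ((Real.log (r₁ + ε n) - l₁)/2)) (1/(n+1)) with hsdef
      set t : ℕ → ℝ := fun n => L₁ - min ((L₁ - w.re)/2) (1/(n+1)) with htdef
      have hlog1 : ∀ n : ℕ, l₁ < Real.log (r₁ + ε n) := fun n =>
        Real.log_lt_log hr₁ (by linarith [hε0 n])
      have hs1 : ∀ n : ℕ, l₁ < s n := by
        intro n
        have h1 : 0 < min (min ((w.re - l₁)/2) ((Real.log (r₁ + ε n) - l₁)/2)) (1/((n:ℝ)+1)) :=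
          lt_min (lt_min (by linarith) (by linarith [hlog1 n])) (hrecpos n)
        simp only [hsdef]; linarith
      have hs2 : ∀ n : ℕ, s n < w.re := by
        intro n
        have h1 : min (min ((w.re - l₁)/2) ((Real.log (r₁ + ε n) - l₁)/2)) (1/((n:ℝ)+1))
            ≤ (w.re - l₁)/2 := (min_le_left _ _).trans (min_le_left _ _)
        simp only [hsdef]; linarith
      have hs3 : ∀ n : ℕ, s n < Real.log (r₁ + ε n) := by
        intro n
        have h1 : min (min ((w.re - l₁)/2) ((Real.log (r₁ + ε n) - l₁)/2)) (1/((n:ℝ)+1))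
            ≤ (Real.log (r₁ + ε n) - l₁)/2 := (min_le_left _ _).trans (min_le_right _ _)
        simp only [hsdef]; linarith [hlog1 n]
      have hs4 : ∀ n : ℕ, s n ≤ l₁ + 1/((n:ℝ)+1) := by
        intro n
        simp only [hsdef]
        have := min_le_right (min ((w.re - l₁)/2) ((Real.log (r₁ + ε n) - l₁)/2)) (1/((n:ℝ)+1))
        linarith
      have ht1 : ∀ n : ℕ, t n < L₁ := by
        intro n
        have h1 : 0 < min ((L₁ - w.re)/2) (1/((n:ℝ)+1)) := lt_min (by linarith) (hrecpos n)
        simp only [htdef]; linarith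
      have ht2 : ∀ n : ℕ, w.re < t n := by
        intro n
        have h1 : min ((L₁ - w.re)/2) (1/((n:ℝ)+1)) ≤ (L₁ - w.re)/2 := min_le_left _ _
        simp only [htdef]; linarith
      have ht3 : ∀ n : ℕ, L₁ - 1/((n:ℝ)+1) ≤ t n := by
        intro n
        have := min_le_right ((L₁ - w.re)/2) (1/((n:ℝ)+1))
        simp only [htdef]; linarith
      have hbound : ∀ n : ℕ, ‖f (Complex.exp w)‖ ≤
          (r₂ + δs n) ^ ((t n - w.re)/(t n - s n)) * R₂ ^ ((w.re - s n)/(t n - s n)) := by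
        intro n
        refine annulus_three_lines hr₁ hR₁ hf (M := R₂) (fun z hz => (hmaps hz).2.le)
          (hs1 n) ((hs2 n).trans (ht2 n)) (ht1 n) (by have := hδpos n; linarith)
          hR₂0 ?_ (fun z hz _ => (hmaps hz).2.le) (hs2 n).le (ht2 n).le
        intro z hz hzabs
        refine ((hεP n z hz).1 ?_).le
        rw [hzabs]
        calc Real.exp (s n) < Real.exp (Real.log (r₁ + ε n)) := Real.exp_lt_exp.2 (hs3 n)
          _ = r₁ + ε n := Real.exp_log (by linarith [hε0 n])
      have hstend : Tendsto s atTop (𝓝 l₁) := by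
        refine tendsto_of_tendsto_of_tendsto_of_le_of_le tendsto_const_nhds
          (g := fun _ => l₁) (h := fun n : ℕ => l₁ + 1/((n:ℝ)+1)) ?_
          (fun n => (hs1 n).le) hs4
        simpa using tendsto_const_nhds.add hrecip
      have httend : Tendsto t atTop (𝓝 L₁) := by
        refine tendsto_of_tendsto_of_tendsto_of_le_of_le
          (g := fun n : ℕ => L₁ - 1/((n:ℝ)+1)) (h := fun _ => L₁) ?_ tendsto_const_nhds
          ht3 (fun n => (ht1 n).le)
        simpa using tendsto_const_nhds.sub hrecip
      have hts : Tendsto (fun n => t n - s n) atTop (𝓝 (L₁ - l₁)) := httend.sub hstend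
      have hp : Tendsto (fun n => (t n - w.re)/(t n - s n)) atTop
          (𝓝 ((L₁ - w.re)/(L₁ - l₁))) :=
        (httend.sub tendsto_const_nhds).div hts hLpos.ne'
      have hq : Tendsto (fun n => (w.re - s n)/(t n - s n)) atTop
          (𝓝 ((w.re - l₁)/(L₁ - l₁))) :=
        (tendsto_const_nhds.sub hstend).div hts hLpos.ne'
      have hbase : Tendsto (fun n => r₂ + δs n) atTop (𝓝 r₂) := by
        simpa using tendsto_const_nhds.add hδ0
      have hlim : Tendsto (fun n => (r₂ + δs n) ^ ((t n - w.re)/(t n - s n)) *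
          R₂ ^ ((w.re - s n)/(t n - s n))) atTop
          (𝓝 (r₂ ^ ((L₁ - w.re)/(L₁ - l₁)) * R₂ ^ ((w.re - l₁)/(L₁ - l₁)))) :=
        (hbase.rpow hp (Or.inl hr₂.ne')).mul (tendsto_const_nhds.rpow hq (Or.inl hR₂0.ne'))
      exact ge_of_tendsto' hlim hbound
    -- lower bound
    have hlb : r₂ ^ ((L₁ - w.re)/(L₁ - l₁)) * R₂ ^ ((w.re - l₁)/(L₁ - l₁)) ≤
        ‖f (Complex.exp w)‖ := by
      set s : ℕ → ℝ := fun n => l₁ + min ((w.re - l₁)/2) (1/(n+1)) with hsdef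
      set t : ℕ → ℝ := fun n =>
        L₁ - min (min ((L₁ - w.re)/2) ((L₁ - Real.log (R₁ - ε n))/2)) (1/(n+1)) with htdef
      have hR₁ε : ∀ n : ℕ, 0 < R₁ - ε n := by
        intro n; have := hεlt n; linarith
      have hlog2 : ∀ n : ℕ, Real.log (R₁ - ε n) < L₁ := fun n =>
        Real.log_lt_log (hR₁ε n) (by linarith [hε0 n])
      have hs1 : ∀ n : ℕ, l₁ < s n := by
        intro n
        have h1 : 0 < min ((w.re - l₁)/2) (1/((n:ℝ)+1)) := lt_min (by linarith) (hrecpos n)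
        simp only [hsdef]; linarith
      have hs2 : ∀ n : ℕ, s n < w.re := by
        intro n
        have h1 : min ((w.re - l₁)/2) (1/((n:ℝ)+1)) ≤ (w.re - l₁)/2 := min_le_left _ _
        simp only [hsdef]; linarith
      have hs4 : ∀ n : ℕ, s n ≤ l₁ + 1/((n:ℝ)+1) := by
        intro n
        have := min_le_right ((w.re - l₁)/2) (1/((n:ℝ)+1))
        simp only [hsdef]; linarith
      have ht1 : ∀ n : ℕ, t n < L₁ := by
        intro n
        have h1 : 0 < min (min ((L₁ - w.re)/2) ((L₁ - Real.log (R₁ - ε n))/2)) (1/((n:ℝ)+1)) :=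
          lt_min (lt_min (by linarith) (by linarith [hlog2 n])) (hrecpos n)
        simp only [htdef]; linarith
      have ht2 : ∀ n : ℕ, w.re < t n := by
        intro n
        have h1 : min (min ((L₁ - w.re)/2) ((L₁ - Real.log (R₁ - ε n))/2)) (1/((n:ℝ)+1))
            ≤ (L₁ - w.re)/2 := (min_le_left _ _).trans (min_le_left _ _)
        simp only [htdef]; linarith
      have ht3 : ∀ n : ℕ, Real.log (R₁ - ε n) < t n := by
        intro n
        have h1 : min (min ((L₁ - w.re)/2) ((L₁ - Real.log (R₁ - ε n))/2)) (1/((n:ℝ)+1))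
            ≤ (L₁ - Real.log (R₁ - ε n))/2 := (min_le_left _ _).trans (min_le_right _ _)
        simp only [htdef]; linarith [hlog2 n]
      have ht4 : ∀ n : ℕ, L₁ - 1/((n:ℝ)+1) ≤ t n := by
        intro n
        have := min_le_right (min ((L₁ - w.re)/2) ((L₁ - Real.log (R₁ - ε n))/2)) (1/((n:ℝ)+1))
        simp only [htdef]; linarith
      have hRδ : ∀ n : ℕ, 0 < R₂ - δs n := by
        intro n; have := hδle n; linarith
      have hbound : ∀ n : ℕ, ‖(f (Complex.exp w))⁻¹‖ ≤
          (r₂⁻¹) ^ ((t n - w.re)/(t n - s n)) * ((R₂ - δs n)⁻¹) ^ ((w.re - s n)/(t n - s n)) := by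
        intro n
        refine annulus_three_lines hr₁ hR₁ (hf.inv hfne) (M := r₂⁻¹)
          ?_ (hs1 n) ((hs2 n).trans (ht2 n)) (ht1 n) (by positivity)
          (by have := hRδ n; positivity) ?_ ?_ (hs2 n).le (ht2 n).le
        · intro z hz
          rw [Pi.inv_apply, norm_inv]
          exact inv_anti₀ hr₂ (hmaps hz).1.le
        · intro z hz _
          rw [Pi.inv_apply, norm_inv]
          exact inv_anti₀ hr₂ (hmaps hz).1.le
        · intro z hz hzabs
          rw [Pi.inv_apply, norm_inv]
          refine inv_anti₀ (hRδ n) ?_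
          refine ((hεP n z hz).2 ?_).le
          rw [hzabs]
          calc R₁ - ε n = Real.exp (Real.log (R₁ - ε n)) := (Real.exp_log (hR₁ε n)).symm
            _ < Real.exp (t n) := Real.exp_lt_exp.2 (ht3 n)
      have hstend : Tendsto s atTop (𝓝 l₁) := by
        refine tendsto_of_tendsto_of_tendsto_of_le_of_le tendsto_const_nhds
          (g := fun _ => l₁) (h := fun n : ℕ => l₁ + 1/((n:ℝ)+1)) ?_
          (fun n => (hs1 n).le) hs4
        simpa using tendsto_const_nhds.add hrecip
      have httend : Tendsto t atTop (𝓝 L₁) := by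
        refine tendsto_of_tendsto_of_tendsto_of_le_of_le
          (g := fun n : ℕ => L₁ - 1/((n:ℝ)+1)) (h := fun _ => L₁) ?_ tendsto_const_nhds
          ht4 (fun n => (ht1 n).le)
        simpa using tendsto_const_nhds.sub hrecip
      have hts : Tendsto (fun n => t n - s n) atTop (𝓝 (L₁ - l₁)) := httend.sub hstend
      have hp : Tendsto (fun n => (t n - w.re)/(t n - s n)) atTop
          (𝓝 ((L₁ - w.re)/(L₁ - l₁))) :=
        (httend.sub tendsto_const_nhds).div hts hLpos.ne'
      have hq : Tendsto (fun n => (w.re - s n)/(t n - s n)) atTop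
          (𝓝 ((w.re - l₁)/(L₁ - l₁))) :=
        (tendsto_const_nhds.sub hstend).div hts hLpos.ne'
      have hbase : Tendsto (fun n => (R₂ - δs n)⁻¹) atTop (𝓝 (R₂⁻¹)) := by
        have h1 : Tendsto (fun n => R₂ - δs n) atTop (𝓝 R₂) := by
          simpa using tendsto_const_nhds.sub hδ0
        exact h1.inv₀ hR₂0.ne'
      have hlim : Tendsto (fun n => (r₂⁻¹) ^ ((t n - w.re)/(t n - s n)) *
          ((R₂ - δs n)⁻¹) ^ ((w.re - s n)/(t n - s n))) atTop
          (𝓝 ((r₂⁻¹) ^ ((L₁ - w.re)/(L₁ - l₁)) * (R₂⁻¹) ^ ((w.re - l₁)/(L₁ - l₁)))) :=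
        (tendsto_const_nhds.rpow hp (Or.inl (by positivity))).mul
          (hbase.rpow hq (Or.inl (by positivity)))
      have hineq := ge_of_tendsto' hlim hbound
      rw [norm_inv, Real.inv_rpow hr₂.le, Real.inv_rpow hR₂0.le, ← mul_inv] at hineq
      have hposB : 0 < r₂ ^ ((L₁ - w.re)/(L₁ - l₁)) * R₂ ^ ((w.re - l₁)/(L₁ - l₁)) := by
        positivity
      exact (inv_le_inv₀ (by linarith) hposB).1 hineq
    exact le_antisymm hub hlb
  -- phase B : rigidity
  set c := α * l₁ - Real.log r₂ with hcdef
  set S := verticalStrip l₁ L₁ with hSdef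
  set F : ℂ → ℂ := fun ζ => f (Complex.exp ζ) * Complex.exp ((c:ℂ) - (α:ℂ) * ζ) with hFdef
  have hre2 : ∀ ζ : ℂ, ((c:ℂ) - (α:ℂ) * ζ).re = c - α * ζ.re := by
    intro ζ
    simp [Complex.sub_re, Complex.ofReal_re, Complex.re_ofReal_mul]
  have hFnorm : ∀ ζ ∈ S, ‖F ζ‖ = 1 := by
    intro ζ hζ
    have hζ' : ζ.re ∈ Set.Ioo l₁ L₁ := hζ
    rw [hFdef]
    simp only [norm_mul, Complex.norm_exp, hre2]
    rw [hmod ζ hζ', ← Real.exp_add]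
    have : Real.log r₂ + α * (ζ.re - l₁) + (c - α * ζ.re) = 0 := by rw [hcdef]; ring
    rw [this, Real.exp_zero]
  have hSopen : IsOpen S := by
    rw [hSdef, verticalStrip]
    exact isOpen_Ioo.preimage Complex.continuous_re
  have hSpre : IsPreconnected S := (strip_convex l₁ L₁).isPreconnected
  have hFdiff : DifferentiableOn ℂ F S := by
    apply DifferentiableOn.mul
    · apply hf.comp Complex.differentiable_exp.differentiableOn
      intro ζ hζ
      exact (exp_mem_annulus hr₁ hR₁0 ζ).2 ⟨hζ.1, hζ.2⟩
    · exact (Complex.differentiable_exp.comp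
        ((differentiable_const _).sub ((differentiable_const _).mul differentiable_id))).differentiableOn
  set w₀ : ℂ := (((l₁ + L₁)/2 : ℝ) : ℂ) with hw₀def
  have hw₀S : w₀ ∈ S := by
    simp only [hSdef, verticalStrip, Set.mem_preimage, hw₀def, Complex.ofReal_re, Set.mem_Ioo]
    constructor <;> linarith
  have hmax : IsMaxOn (norm ∘ F) S w₀ := by
    refine isMaxOn_iff.mpr fun ζ hζ => ?_
    simp only [Function.comp_apply, hFnorm ζ hζ, hFnorm w₀ hw₀S]
    exact le_refl 1
  have heqOn := Complex.eqOn_of_isPreconnected_of_isMaxOn_norm hSpre hSopen hFdiff hw₀S hmax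
  set w₁ : ℂ := w₀ + 2*(π:ℂ)*Complex.I with hw₁def
  have hw₁S : w₁ ∈ S := by
    simp only [hSdef, verticalStrip, Set.mem_preimage, hw₁def, Complex.add_re, Complex.ofReal_re,
      Complex.mul_re, Complex.I_re, Complex.I_im, Complex.ofReal_im, Set.mem_Ioo, hw₀def]
    norm_num
    constructor <;> linarith
  have hFeq : F w₁ = F w₀ := by
    have h1 := heqOn hw₁S
    simpa using h1
  have hexpw : Complex.exp w₁ = Complex.exp w₀ := by
    rw [hw₁def, Complex.exp_add, Complex.exp_two_pi_mul_I, mul_one]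
  have hmem₀ : Complex.exp w₀ ∈ annulus r₁ R₁ := by
    refine (exp_mem_annulus hr₁ hR₁0 w₀).2 ?_
    rw [hw₀def]
    simp only [Complex.ofReal_re]
    constructor <;> linarith
  have hargeq : ((c:ℂ) - (α:ℂ) * w₁) = ((c:ℂ) - (α:ℂ) * w₀) + (-(α:ℂ) * (2*(π:ℂ)*Complex.I)) := by
    rw [hw₁def]; ring
  rw [hFdef] at hFeq
  simp only [hexpw, hargeq, Complex.exp_add, ← mul_assoc] at hFeq
  have hne : f (Complex.exp w₀) * Complex.exp ((c:ℂ) - (α:ℂ) * w₀) ≠ 0 :=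
    mul_ne_zero (hfne _ hmem₀) (Complex.exp_ne_zero _)
  have hone : Complex.exp (-(α:ℂ) * (2*(π:ℂ)*Complex.I)) = 1 := by
    have h2 : f (Complex.exp w₀) * Complex.exp ((c:ℂ) - (α:ℂ) * w₀) *
        Complex.exp (-(α:ℂ) * (2*(π:ℂ)*Complex.I)) =
        f (Complex.exp w₀) * Complex.exp ((c:ℂ) - (α:ℂ) * w₀) * 1 := by
      have harg : (-(α:ℂ)) * (2*(π:ℂ)*Complex.I) = -(α:ℂ) * 2 * (π:ℂ) * Complex.I := by ring
      rw [mul_one, harg]; exact hFeq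
    exact mul_left_cancel₀ hne h2
  obtain ⟨n, hn⟩ := Complex.exp_eq_one_iff.1 hone
  have h2πI : (2*(π:ℂ)*Complex.I) ≠ 0 := by
    refine mul_ne_zero (mul_ne_zero two_ne_zero ?_) Complex.I_ne_zero
    exact_mod_cast Real.pi_ne_zero
  have hαn : -(α:ℂ) = (n:ℂ) := by
    apply mul_right_cancel₀ h2πI
    rw [hn]
  have hαr : α = ((-n : ℤ) : ℝ) := by
    have : ((α:ℝ):ℂ) = (((-n : ℤ):ℝ):ℂ) := by push_cast; linear_combination -hαn
    exact_mod_cast this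
  have hn1 : (1:ℤ) ≤ -n := by
    have h0 : (0:ℝ) < ((-n : ℤ):ℝ) := hαr ▸ hαpos
    have : (0:ℤ) < -n := by exact_mod_cast h0
    omega
  have hα1 : (1:ℝ) ≤ α := by
    rw [hαr]; exact_mod_cast hn1
  rw [hαdef] at hα1
  have := (one_le_div hLpos).1 hα1
  linarith

lemma dichotomy {r₁ R₁ r₂ R₂ : ℝ} (hr₁ : 0 < r₁) (hR₁ : r₁ < R₁) (hr₂ : 0 < r₂) (hR₂ : r₂ < R₂)
    {f g : ℂ → ℂ}
    (hf : DifferentiableOn ℂ f (annulus r₁ R₁))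
    (hg : DifferentiableOn ℂ g (annulus r₂ R₂))
    (hmaps : Set.MapsTo f (annulus r₁ R₁) (annulus r₂ R₂))
    (hmaps' : Set.MapsTo g (annulus r₂ R₂) (annulus r₁ R₁))
    (hgf : ∀ z ∈ annulus r₁ R₁, g (f z) = z)
    (hfg : ∀ z ∈ annulus r₂ R₂, f (g z) = z) :
    (∀ δ : ℝ, 0 < δ → ∃ ε : ℝ, 0 < ε ∧ ε < (R₁ - r₁)/2 ∧
      ∀ z ∈ annulus r₁ R₁, (‖z‖ < r₁ + ε → ‖f z‖ < r₂ + δ) ∧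
        (R₁ - ε < ‖z‖ → R₂ - δ < ‖f z‖))
    ∨ (∀ δ : ℝ, 0 < δ → ∃ ε : ℝ, 0 < ε ∧ ε < (R₁ - r₁)/2 ∧
      ∀ z ∈ annulus r₁ R₁, (‖z‖ < r₁ + ε → R₂ - δ < ‖f z‖) ∧
        (R₁ - ε < ‖z‖ → ‖f z‖ < r₂ + δ)) := by
  have hfne : ∀ z ∈ annulus r₁ R₁, f z ≠ 0 := by
    intro z hz h0
    have h1 := (hmaps hz).1
    rw [h0] at h1; simp at h1; linarith
  -- step 1 : avoid the middle
  have havoid : ∀ δ : ℝ, 0 < δ → δ < (R₂ - r₂)/2 → ∃ ε : ℝ, 0 < ε ∧ ε < (R₁ - r₁)/2 ∧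
      ∀ z ∈ annulus r₁ R₁, (‖z‖ < r₁ + ε ∨ R₁ - ε < ‖z‖) →
        (‖f z‖ < r₂ + δ ∨ R₂ - δ < ‖f z‖) := by
    intro δ hδ0 hδlt
    set K₀ : Set ℂ := (fun z : ℂ => ‖z‖) ⁻¹' (Set.Icc (r₂ + δ) (R₂ - δ)) with hK₀
    have hK₀sub : K₀ ⊆ annulus r₂ R₂ := by
      intro z hz
      simp only [hK₀, Set.mem_preimage, Set.mem_Icc] at hz
      exact ⟨by linarith [hz.1], by linarith [hz.2]⟩
    have hK₀cpt : IsCompact K₀ := by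
      apply Metric.isCompact_of_isClosed_isBounded (isClosed_Icc.preimage continuous_norm)
      apply (Metric.isBounded_closedBall (x := (0:ℂ)) (r := R₂ - δ)).subset
      intro z hz
      simp only [hK₀, Set.mem_preimage, Set.mem_Icc] at hz
      simpa [Metric.mem_closedBall, Complex.dist_eq] using hz.2
    have hK₀ne : K₀.Nonempty := by
      refine ⟨(((r₂+R₂)/2 : ℝ) : ℂ), ?_⟩
      simp only [hK₀, Set.mem_preimage, Complex.norm_real, Real.norm_eq_abs, Set.mem_Icc]
      rw [_root_.abs_of_nonneg (show (0:ℝ) ≤ (r₂+R₂)/2 by linarith)]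
      constructor <;> linarith
    have hKcpt : IsCompact (g '' K₀) := hK₀cpt.image_of_continuousOn (hg.continuousOn.mono hK₀sub)
    have hKsub : g '' K₀ ⊆ annulus r₁ R₁ := by
      rintro z ⟨w, hw, rfl⟩; exact hmaps' (hK₀sub hw)
    have hKne : (g '' K₀).Nonempty := hK₀ne.image g
    obtain ⟨z₀, hz₀K, hz₀min⟩ := hKcpt.exists_isMinOn hKne continuous_norm.continuousOn
    obtain ⟨z₁, hz₁K, hz₁max⟩ := hKcpt.exists_isMaxOn hKne continuous_norm.continuousOn
    have hz₀A := hKsub hz₀K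
    have hz₁A := hKsub hz₁K
    set ε := min (min ((‖z₀‖ - r₁)/2) ((R₁ - ‖z₁‖)/2)) ((R₁ - r₁)/4) with hε
    have hε0 : 0 < ε :=
      lt_min (lt_min (by linarith [hz₀A.1]) (by linarith [hz₁A.2])) (by linarith)
    refine ⟨ε, hε0, lt_of_le_of_lt (min_le_right _ _) (by linarith), ?_⟩
    intro z hz hside
    by_contra hcon
    push_neg at hcon
    have hfK₀ : f z ∈ K₀ := by
      simp only [hK₀, Set.mem_preimage, Set.mem_Icc]
      exact ⟨hcon.1, hcon.2⟩
    have hzK : z ∈ g '' K₀ := ⟨f z, hfK₀, hgf z hz⟩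
    have h1 : ‖z₀‖ ≤ ‖z‖ := isMinOn_iff.mp hz₀min z hzK
    have h2 : ‖z‖ ≤ ‖z₁‖ := isMaxOn_iff.mp hz₁max z hzK
    rcases hside with h | h
    · have hle : ε ≤ (‖z₀‖ - r₁)/2 := (min_le_left _ _).trans (min_le_left _ _)
      linarith
    · have hle : ε ≤ (R₁ - ‖z₁‖)/2 := (min_le_left _ _).trans (min_le_right _ _)
      linarith
  -- step 2 : dichotomy on connected subsets
  have hshell : ∀ (U : Set ℂ), IsPreconnected U → U ⊆ annulus r₁ R₁ →
      ∀ δ : ℝ, r₂ + δ ≤ R₂ - δ →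
      (∀ z ∈ U, ‖f z‖ < r₂ + δ ∨ R₂ - δ < ‖f z‖) →
      (∀ z ∈ U, ‖f z‖ < r₂ + δ) ∨ (∀ z ∈ U, R₂ - δ < ‖f z‖) := by
    intro U hUpre hUsub δ hδint hUalt
    set u := (annulus r₁ R₁) ∩ f ⁻¹' ((fun z : ℂ => ‖z‖) ⁻¹' (Set.Iio (r₂ + δ))) with hu
    set v := (annulus r₁ R₁) ∩ f ⁻¹' ((fun z : ℂ => ‖z‖) ⁻¹' (Set.Ioi (R₂ - δ))) with hv
    have huo : IsOpen u := hf.continuousOn.isOpen_inter_preimage (annulus_isOpen _ _)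
      (isOpen_Iio.preimage continuous_norm)
    have hvo : IsOpen v := hf.continuousOn.isOpen_inter_preimage (annulus_isOpen _ _)
      (isOpen_Ioi.preimage continuous_norm)
    have hdisj : Disjoint u v := by
      rw [Set.disjoint_iff_inter_eq_empty]
      ext z
      simp only [hu, hv, Set.mem_inter_iff, Set.mem_preimage, Set.mem_Iio, Set.mem_Ioi,
        Set.mem_empty_iff_false, iff_false]
      rintro ⟨⟨-, h1⟩, ⟨-, h2⟩⟩
      linarith
    have hcover : U ⊆ u ∪ v := by
      intro z hz
      rcases hUalt z hz with h | h
      · exact Or.inl ⟨hUsub hz, h⟩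
      · exact Or.inr ⟨hUsub hz, h⟩
    rcases hUpre.subset_or_subset huo hvo hdisj hcover with h | h
    · exact Or.inl (fun z hz => (h hz).2)
    · exact Or.inr (fun z hz => (h hz).2)
  -- step 3 : per-δ orientation
  have hcase : ∀ δ : ℝ, 0 < δ → δ ≤ (R₂ - r₂)/4 → ∃ ε : ℝ, 0 < ε ∧ ε < (R₁ - r₁)/2 ∧
      (((∀ z ∈ annulus r₁ (r₁+ε), ‖f z‖ < r₂ + δ) ∧
        (∀ z ∈ annulus (R₁-ε) R₁, R₂ - δ < ‖f z‖))
       ∨ ((∀ z ∈ annulus r₁ (r₁+ε), R₂ - δ < ‖f z‖) ∧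
        (∀ z ∈ annulus (R₁-ε) R₁, ‖f z‖ < r₂ + δ))) := by
    intro δ hδ0 hδle
    obtain ⟨ε, hε0, hεlt, hav⟩ := havoid δ hδ0 (by linarith)
    have hδint : r₂ + δ ≤ R₂ - δ := by linarith
    have hinnersub : annulus r₁ (r₁+ε) ⊆ annulus r₁ R₁ := by
      intro z hz; exact ⟨hz.1, by linarith [hz.2]⟩
    have houtersub : annulus (R₁-ε) R₁ ⊆ annulus r₁ R₁ := by
      intro z hz; exact ⟨by linarith [hz.1], hz.2⟩
    have hin := hshell (annulus r₁ (r₁+ε))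
      (annulus_isConnected hr₁ (by linarith)).isPreconnected hinnersub δ hδint
      (fun z hz => hav z (hinnersub hz) (Or.inl hz.2))
    have hout := hshell (annulus (R₁-ε) R₁)
      (annulus_isConnected (by linarith) (by linarith)).isPreconnected houtersub δ hδint
      (fun z hz => hav z (houtersub hz) (Or.inr hz.1))
    -- surjectivity point
    set w₀ : ℂ := (((r₂+R₂)/2 : ℝ) : ℂ) with hw₀
    have hw₀A : w₀ ∈ annulus r₂ R₂ := by
      simp only [annulus, Set.mem_setOf_eq, hw₀, Complex.norm_real, Real.norm_eq_abs]
      rw [_root_.abs_of_nonneg (show (0:ℝ) ≤ (r₂+R₂)/2 by linarith)]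
      constructor <;> linarith
    have hz₀A : g w₀ ∈ annulus r₁ R₁ := hmaps' hw₀A
    have hfz₀ : f (g w₀) = w₀ := hfg w₀ hw₀A
    have habsw₀ : ‖w₀‖ = (r₂+R₂)/2 := by
      rw [hw₀, Complex.norm_real, Real.norm_eq_abs, _root_.abs_of_nonneg (show (0:ℝ) ≤ (r₂+R₂)/2 by linarith)]
    -- rule out both-small
    have hnotboth1 : ¬ ((∀ z ∈ annulus r₁ (r₁+ε), ‖f z‖ < r₂ + δ) ∧
        (∀ z ∈ annulus (R₁-ε) R₁, ‖f z‖ < r₂ + δ)) := by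
      rintro ⟨hIn, hOut⟩
      have hall : ∀ z ∈ annulus r₁ R₁, ‖f z‖ ≤ r₂ + δ := by
        have hmid := norm_le_on_annulus (r := r₁) (R := R₁) (s := r₁ + ε/2) (t := R₁ - ε/2)
          (C := r₂ + δ) (by linarith) (by linarith) (by linarith) hf ?_
        · intro z hz
          rcases lt_or_ge (‖z‖) (r₁ + ε) with h | h
          · exact (hIn z ⟨hz.1, h⟩).le
          rcases lt_or_ge (R₁ - ε) (‖z‖) with h' | h'
          · exact (hOut z ⟨h', hz.2⟩).le
          · have := hmid z ⟨by linarith, by linarith⟩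
            simpa using this
        · intro z hzc
          rcases hzc with h | h
          · have hzmem : z ∈ annulus r₁ (r₁+ε) := ⟨by rw [h]; linarith, by rw [h]; linarith⟩
            simpa using (hIn z hzmem).le
          · have hzmem : z ∈ annulus (R₁-ε) R₁ := ⟨by rw [h]; linarith, by rw [h]; linarith⟩
            simpa using (hOut z hzmem).le
      have := hall (g w₀) hz₀A
      rw [hfz₀, habsw₀] at this
      linarith
    -- rule out both-big
    have hnotboth2 : ¬ ((∀ z ∈ annulus r₁ (r₁+ε), R₂ - δ < ‖f z‖) ∧
        (∀ z ∈ annulus (R₁-ε) R₁, R₂ - δ < ‖f z‖)) := by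
      rintro ⟨hIn, hOut⟩
      have hRδ : (0:ℝ) < R₂ - δ := by linarith
      have hall : ∀ z ∈ annulus r₁ R₁, R₂ - δ ≤ ‖f z‖ := by
        have hmid := norm_le_on_annulus (r := r₁) (R := R₁) (s := r₁ + ε/2) (t := R₁ - ε/2)
          (C := (R₂ - δ)⁻¹) (by linarith) (by linarith) (by linarith) (hf.inv hfne) ?_
        · intro z hz
          rcases lt_or_ge (‖z‖) (r₁ + ε) with h | h
          · exact (hIn z ⟨hz.1, h⟩).le
          rcases lt_or_ge (R₁ - ε) (‖z‖) with h' | h'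
          · exact (hOut z ⟨h', hz.2⟩).le
          · have h2 := hmid z ⟨by linarith, by linarith⟩
            simp only [Pi.inv_apply, norm_inv] at h2
            have hfz0 : 0 < ‖f z‖ := by
              have := (hmaps hz).1; linarith
            calc R₂ - δ = ((R₂ - δ)⁻¹)⁻¹ := (inv_inv _).symm
              _ ≤ (‖f z‖)⁻¹⁻¹ := by
                  apply inv_anti₀ (by positivity) h2
              _ = ‖f z‖ := inv_inv _
        · intro z hzc
          have hzA : z ∈ annulus r₁ R₁ ∧ R₂ - δ < ‖f z‖ := by
            rcases hzc with h | h
            · have hzmem : z ∈ annulus r₁ (r₁+ε) := ⟨by rw [h]; linarith, by rw [h]; linarith⟩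
              exact ⟨hinnersub hzmem, hIn z hzmem⟩
            · have hzmem : z ∈ annulus (R₁-ε) R₁ := ⟨by rw [h]; linarith, by rw [h]; linarith⟩
              exact ⟨houtersub hzmem, hOut z hzmem⟩
          simp only [Pi.inv_apply, norm_inv]
          exact inv_anti₀ hRδ hzA.2.le
      have := hall (g w₀) hz₀A
      rw [hfz₀, habsw₀] at this
      linarith
    rcases hin with hI | hI <;> rcases hout with hO | hO
    · exact absurd ⟨hI, hO⟩ hnotboth1
    · exact ⟨ε, hε0, hεlt, Or.inl ⟨hI, hO⟩⟩
    · exact ⟨ε, hε0, hεlt, Or.inr ⟨hI, hO⟩⟩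
    · exact absurd ⟨hI, hO⟩ hnotboth2
  -- step 4 : consistency across δ
  have hδ₀0 : (0:ℝ) < (R₂ - r₂)/4 := by linarith
  obtain ⟨ε₀, hε₀0, hε₀lt, hcase₀⟩ := hcase ((R₂ - r₂)/4) hδ₀0 le_rfl
  have hmain : ∀ δ : ℝ, 0 < δ → δ ≤ (R₂ - r₂)/4 →
      ∀ ε : ℝ, 0 < ε → ε < (R₁ - r₁)/2 →
      ((∀ z ∈ annulus r₁ (r₁+ε), ‖f z‖ < r₂ + δ) ∧
        (∀ z ∈ annulus (R₁-ε) R₁, R₂ - δ < ‖f z‖))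
       ∨ ((∀ z ∈ annulus r₁ (r₁+ε), R₂ - δ < ‖f z‖) ∧
        (∀ z ∈ annulus (R₁-ε) R₁, ‖f z‖ < r₂ + δ)) → True := fun _ _ _ _ _ _ _ => trivial
  clear hmain
  -- helper: a point on the inner overlap circle
  have hinpt : ∀ ε ε' : ℝ, 0 < ε → 0 < ε' → ε < (R₁ - r₁)/2 →
      ∃ z : ℂ, z ∈ annulus r₁ (r₁+ε) ∧ z ∈ annulus r₁ (r₁+ε') := by
    intro ε ε' hε hε' hεlt'
    refine ⟨(((r₁ + (min ε ε')/2) : ℝ) : ℂ), ?_, ?_⟩ <;>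
    · constructor <;>
      · simp only [Complex.norm_real, Real.norm_eq_abs]
        rw [_root_.abs_of_nonneg (show (0:ℝ) ≤ r₁ + (min ε ε')/2 by have := lt_min hε hε'; linarith)]
        have h1 : min ε ε' ≤ ε := min_le_left _ _
        have h2 : min ε ε' ≤ ε' := min_le_right _ _
        have := lt_min hε hε'
        linarith
  rcases hcase₀ with h₀ | h₀
  · left
    intro δ hδ
    set δ' := min δ ((R₂ - r₂)/4) with hδ'
    have hδ'0 : 0 < δ' := lt_min hδ hδ₀0
    obtain ⟨ε, hε0, hεlt, hc⟩ := hcase δ' hδ'0 (min_le_right _ _)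
    rcases hc with h | h
    · refine ⟨ε, hε0, hεlt, ?_⟩
      intro z hz
      have hd1 : δ' ≤ δ := min_le_left _ _
      constructor
      · intro habs
        exact lt_of_lt_of_le (h.1 z ⟨hz.1, habs⟩) (by linarith)
      · intro habs
        exact lt_of_le_of_lt (by linarith) (h.2 z ⟨habs, hz.2⟩)
    · exfalso
      obtain ⟨z, hz1, hz2⟩ := hinpt ε ε₀ hε0 hε₀0 hεlt
      have hA := h.1 z hz1
      have hB := h₀.1 z hz2
      have : δ' ≤ (R₂ - r₂)/4 := min_le_right _ _
      linarith
  · right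
    intro δ hδ
    set δ' := min δ ((R₂ - r₂)/4) with hδ'
    have hδ'0 : 0 < δ' := lt_min hδ hδ₀0
    obtain ⟨ε, hε0, hεlt, hc⟩ := hcase δ' hδ'0 (min_le_right _ _)
    rcases hc with h | h
    · exfalso
      obtain ⟨z, hz1, hz2⟩ := hinpt ε ε₀ hε0 hε₀0 hεlt
      have hA := h₀.1 z hz2
      have hB := h.1 z hz1
      have : δ' ≤ (R₂ - r₂)/4 := min_le_right _ _
      linarith
    · refine ⟨ε, hε0, hεlt, ?_⟩
      intro z hz
      have hd1 : δ' ≤ δ := min_le_left _ _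
      constructor
      · intro habs
        exact lt_of_le_of_lt (by linarith) (h.1 z ⟨hz.1, habs⟩)
      · intro habs
        exact lt_of_lt_of_le (h.2 z ⟨habs, hz.2⟩) (by linarith)

lemma mod_le {r₁ R₁ r₂ R₂ : ℝ} (hr₁ : 0 < r₁) (hR₁ : r₁ < R₁) (hr₂ : 0 < r₂) (hR₂ : r₂ < R₂)
    {f g : ℂ → ℂ}
    (hf : DifferentiableOn ℂ f (annulus r₁ R₁))
    (hg : DifferentiableOn ℂ g (annulus r₂ R₂))
    (hmaps : Set.MapsTo f (annulus r₁ R₁) (annulus r₂ R₂))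
    (hmaps' : Set.MapsTo g (annulus r₂ R₂) (annulus r₁ R₁))
    (hgf : ∀ z ∈ annulus r₁ R₁, g (f z) = z)
    (hfg : ∀ z ∈ annulus r₂ R₂, f (g z) = z) :
    Real.log R₁ - Real.log r₁ ≤ Real.log R₂ - Real.log r₂ := by
  have hR₂0 : 0 < R₂ := hr₂.trans hR₂
  have hfne : ∀ z ∈ annulus r₁ R₁, f z ≠ 0 := by
    intro z hz h0
    have h1 := (hmaps hz).1
    rw [h0] at h1; simp at h1; linarith
  have hfpos : ∀ z ∈ annulus r₁ R₁, 0 < ‖f z‖ := by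
    intro z hz
    have := (hmaps hz).1; linarith
  rcases dichotomy hr₁ hR₁ hr₂ hR₂ hf hg hmaps hmaps' hgf hfg with hor | hor
  · exact key hr₁ hR₁ hr₂ hR₂ hf hmaps hor
  · set f' : ℂ → ℂ := fun z => ((r₂*R₂ : ℝ) : ℂ) * (f z)⁻¹ with hf'def
    have hf' : DifferentiableOn ℂ f' (annulus r₁ R₁) := (hf.inv hfne).const_mul _
    have habs' : ∀ z ∈ annulus r₁ R₁, ‖f' z‖ = r₂*R₂ / ‖f z‖ := by
      intro z hz
      rw [hf'def]
      simp only [norm_mul, norm_inv, Complex.norm_real, Real.norm_eq_abs]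
      rw [_root_.abs_of_pos hr₂, _root_.abs_of_pos hR₂0, div_eq_mul_inv]
    have hmaps'' : Set.MapsTo f' (annulus r₁ R₁) (annulus r₂ R₂) := by
      intro z hz
      have h1 := (hmaps hz).1
      have h2 := (hmaps hz).2
      have ha := hfpos z hz
      refine ⟨?_, ?_⟩ <;> rw [habs' z hz]
      · rw [lt_div_iff₀ ha]; nlinarith
      · rw [div_lt_iff₀ ha]; nlinarith
    have hor' : ∀ δ : ℝ, 0 < δ → ∃ ε : ℝ, 0 < ε ∧ ε < (R₁ - r₁)/2 ∧
        ∀ z ∈ annulus r₁ R₁, (‖z‖ < r₁ + ε → ‖f' z‖ < r₂ + δ) ∧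
          (R₁ - ε < ‖z‖ → R₂ - δ < ‖f' z‖) := by
      intro δ hδ
      set δm := min δ ((R₂ - r₂)/2) with hδm
      have hδm0 : 0 < δm := lt_min hδ (by linarith)
      have hδmle : δm ≤ δ := min_le_left _ _
      have hδmlt : δm ≤ (R₂ - r₂)/2 := min_le_right _ _
      have hRδm : 0 < R₂ - δm := by linarith
      set δ₁ := R₂*δm/(2*(r₂+δm)) with hδ₁
      set δ₂ := r₂*δm/(2*(R₂-δm)) with hδ₂
      have hδ₁0 : 0 < δ₁ := by rw [hδ₁]; positivity
      have hδ₂0 : 0 < δ₂ := by rw [hδ₂]; positivity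
      have h₁ : δ₁ * (r₂ + δm) = R₂*δm/2 := by
        rw [hδ₁]; field_simp
      have h₂ : δ₂ * (R₂ - δm) = r₂*δm/2 := by
        rw [hδ₂]; field_simp
      set δc := min δ₁ δ₂ with hδc
      have hδc0 : 0 < δc := lt_min hδ₁0 hδ₂0
      obtain ⟨ε, hε0, hεlt, hP⟩ := hor δc hδc0
      refine ⟨ε, hε0, hεlt, ?_⟩
      intro z hz
      have ha := hfpos z hz
      constructor
      · intro habs
        have hfb : R₂ - δc < ‖f z‖ := (hP z hz).1 habs
        have hfb' : R₂ - δ₁ < ‖f z‖ :=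
          lt_of_le_of_lt (by have := min_le_left δ₁ δ₂; linarith) hfb
        rw [habs' z hz, div_lt_iff₀ ha]
        have hstep : r₂*R₂ < (r₂ + δm) * (R₂ - δ₁) := by nlinarith
        have hstep2 : (r₂ + δm) * (R₂ - δ₁) ≤ (r₂ + δm) * ‖f z‖ :=
          mul_le_mul_of_nonneg_left hfb'.le (by linarith)
        have hstep3 : (r₂ + δm) * ‖f z‖ ≤ (r₂ + δ) * ‖f z‖ :=
          mul_le_mul_of_nonneg_right (by linarith) ha.le
        linarith
      · intro habs
        have hfb : ‖f z‖ < r₂ + δc := (hP z hz).2 habs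
        have hfb' : ‖f z‖ < r₂ + δ₂ :=
          lt_of_lt_of_le hfb (by have := min_le_right δ₁ δ₂; linarith)
        rw [habs' z hz, lt_div_iff₀ ha]
        have hstep : (R₂ - δm) * (r₂ + δ₂) < r₂*R₂ := by nlinarith
        have hstep2 : (R₂ - δm) * ‖f z‖ ≤ (R₂ - δm) * (r₂ + δ₂) :=
          mul_le_mul_of_nonneg_left hfb'.le (by linarith)
        have hstep3 : (R₂ - δ) * ‖f z‖ ≤ (R₂ - δm) * ‖f z‖ :=
          mul_le_mul_of_nonneg_right (by linarith) ha.le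
        linarith
    exact key hr₁ hR₁ hr₂ hR₂ hf' hmaps'' hor'

/-- The conformal module `(1/(2π)) log (R/r)` of an annulus is invariant under
biholomorphic maps between round annuli. -/
theorem conformal_module_biholo_invariant (r₁ R₁ r₂ R₂ : ℝ)
    (hr₁ : 0 < r₁) (hR₁ : r₁ < R₁) (hr₂ : 0 < r₂) (hR₂ : r₂ < R₂)
    (f g : ℂ → ℂ)
    (hf : DifferentiableOn ℂ f (annulus r₁ R₁))
    (hg : DifferentiableOn ℂ g (annulus r₂ R₂))
    (hmaps : Set.MapsTo f (annulus r₁ R₁) (annulus r₂ R₂))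
    (hmaps' : Set.MapsTo g (annulus r₂ R₂) (annulus r₁ R₁))
    (hgf : ∀ z ∈ annulus r₁ R₁, g (f z) = z)
    (hfg : ∀ z ∈ annulus r₂ R₂, f (g z) = z) :
    (1 / (2 * π)) * Real.log (R₁ / r₁) = (1 / (2 * π)) * Real.log (R₂ / r₂) := by
  have hR₁0 : 0 < R₁ := hr₁.trans hR₁
  have hR₂0 : 0 < R₂ := hr₂.trans hR₂
  have h1 := mod_le hr₁ hR₁ hr₂ hR₂ hf hg hmaps hmaps' hgf hfg
  have h2 := mod_le hr₂ hR₂ hr₁ hR₁ hg hf hmaps' hmaps hfg hgf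
  rw [Real.log_div hR₁0.ne' hr₁.ne', Real.log_div hR₂0.ne' hr₂.ne']
  have heq : Real.log R₁ - Real.log r₁ = Real.log R₂ - Real.log r₂ := le_antisymm h1 h2
  rw [heq]
end
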